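/- arXiv:1609.02790 — 5 statements merged into one kernel-verified Lean document; each statement's English description precedes it below -/
import Mathlib

section
/- Let P be a labeled poset on [p] and s : [p] → ℤ₊. Then, as formal power series in x₁,…,x_p, y₁,…,y_p, one has F⁺_{(P,s)}(x,y) = ∑_{τ=(π,r) ∈ L(P,s)} y^r · (∏_{i ∈ D₂(τ)} x_{π_{i+1}} ⋯ x_{π_p}) · ∏_{i ∈ [p]} (1 − x_{π_i} x_{π_{i+1}} ⋯ x_{π_p})^{−1}, where for i = 0 the product x_{π_{i+1}} ⋯ x_{π_p} is x_{π_1} ⋯ x_{π_p}. -/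
open scoped Classical

noncomputable section

/-- `f : Fin p → ℕ` is a lecture hall `(P,s)`-partition: labels are compared via the
usual order on `Fin p`. -/
def IsLHPart {p : ℕ} (P : PartialOrder (Fin p)) (s : Fin p → ℕ) (f : Fin p → ℕ) : Prop :=
  (∀ x y, P.lt x y → (f x : ℚ) / (s x : ℚ) ≤ (f y : ℚ) / (s y : ℚ)) ∧
  ∀ x y, P.lt x y → y < x → (f x : ℚ) / (s x : ℚ) < (f y : ℚ) / (s y : ℚ)

/-- The set of linear extensions (Jordan–Hölder set) of a labeled poset. -/
def LinExt {p : ℕ} (P : PartialOrder (Fin p)) : Set (Equiv.Perm (Fin p)) :=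
  {π | ∀ i j, P.le (π i) (π j) → i ≤ j}

/-- The set `L(P,s)` of `s`-colored permutations `(π, r)` with `π ∈ L(P)`. -/
def LPs {p : ℕ} (P : PartialOrder (Fin p)) (s : Fin p → ℕ) :
    Finset (Equiv.Perm (Fin p) × (∀ x : Fin p, Fin (s x))) :=
  Finset.univ.filter fun τ => τ.1 ∈ LinExt P

/-- Descent of `τ = (π,r)` at (1-based) position `i`. -/
def IsDesc {p : ℕ} (s : Fin p → ℕ) (π : Equiv.Perm (Fin p)) (r : Fin p → ℕ) (i : ℕ) : Prop :=
  ∃ (h1 : i - 1 < p) (h2 : i < p),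
    ((π ⟨i - 1, h1⟩ < π ⟨i, h2⟩ ∧
      (r (π ⟨i - 1, h1⟩) : ℚ) / (s (π ⟨i - 1, h1⟩) : ℚ) >
        (r (π ⟨i, h2⟩) : ℚ) / (s (π ⟨i, h2⟩) : ℚ)) ∨
    (π ⟨i, h2⟩ < π ⟨i - 1, h1⟩ ∧
      (r (π ⟨i - 1, h1⟩) : ℚ) / (s (π ⟨i - 1, h1⟩) : ℚ) ≥
        (r (π ⟨i, h2⟩) : ℚ) / (s (π ⟨i, h2⟩) : ℚ)))

/-- The descent set `D₁(τ) ⊆ [p-1]`. -/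
def D1 {p : ℕ} (s : Fin p → ℕ) (π : Equiv.Perm (Fin p)) (r : Fin p → ℕ) : Finset ℕ :=
  (Finset.Icc 1 (p - 1)).filter (IsDesc s π r)

/-- The descent set `D₃(τ)`: descents of `(π, r + 1)` (i.e. using `(r(x)+1)/s(x)`). -/
def D3 {p : ℕ} (s : Fin p → ℕ) (π : Equiv.Perm (Fin p)) (r : Fin p → ℕ) : Finset ℕ :=
  D1 s π fun x => r x + 1

/-- `D₂(τ) = D₁(τ) ∪ {0}` if `r(π₁) = 0`, else `D₁(τ)`. -/
def D2 {p : ℕ} (hp : 0 < p) (s : Fin p → ℕ) (π : Equiv.Perm (Fin p)) (r : Fin p → ℕ) :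
    Finset ℕ :=
  if r (π ⟨0, hp⟩) = 0 then insert 0 (D1 s π r) else D1 s π r

/-- `D(τ) = D₁(τ) ∪ {p}` if `r(π_p) > 0`, else `D₁(τ)`. -/
def Dfull {p : ℕ} (hp : 0 < p) (s : Fin p → ℕ) (π : Equiv.Perm (Fin p)) (r : Fin p → ℕ) :
    Finset ℕ :=
  if r (π ⟨p - 1, Nat.sub_lt hp Nat.one_pos⟩) = 0 then D1 s π r else insert p (D1 s π r)

/-- `D₄(τ) = D₂(τ) ∪ {p}` if `r(π_p) > 0`, else `D₂(τ)`. -/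
def D4 {p : ℕ} (hp : 0 < p) (s : Fin p → ℕ) (π : Equiv.Perm (Fin p)) (r : Fin p → ℕ) :
    Finset ℕ :=
  if r (π ⟨p - 1, Nat.sub_lt hp Nat.one_pos⟩) = 0 then D2 hp s π r
  else insert p (D2 hp s π r)

/-- `x_{π_{i+1}} ⋯ x_{π_p}` as a monomial in `MvPowerSeries (Fin p ⊕ Fin p) ℚ`
(`Sum.inl` indexes the `x`-variables, `Sum.inr` the `y`-variables); here `i` is the
number of leading positions omitted, so `i = 0` gives `x_{π_1} ⋯ x_{π_p}` and `i = p`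
gives the empty product `1`. -/
def xprod {p : ℕ} (π : Equiv.Perm (Fin p)) (i : ℕ) : MvPowerSeries (Fin p ⊕ Fin p) ℚ :=
  ∏ j ∈ Finset.univ.filter fun j : Fin p => i ≤ (j : ℕ),
    MvPowerSeries.X (Sum.inl (π j))

/-- The monomial `y^r`. -/
def yprod {p : ℕ} (r : Fin p → ℕ) : MvPowerSeries (Fin p ⊕ Fin p) ℚ :=
  ∏ x : Fin p, MvPowerSeries.X (Sum.inr x) ^ r x

variable {σ : Type*}

/-- geometric series along a monomial -/
def Geom (m : σ →₀ ℕ) : MvPowerSeries σ ℚ := fun e => if ∃ n : ℕ, e = n • m then 1 else 0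

lemma coeff_Geom (m e : σ →₀ ℕ) :
    MvPowerSeries.coeff e (Geom m) = if ∃ n : ℕ, e = n • m then 1 else 0 := rfl

lemma Geom_mul (m : σ →₀ ℕ) (hm : m ≠ 0) :
    Geom m * (1 - MvPowerSeries.monomial m 1) = 1 := by
  ext e
  rw [mul_sub, mul_one, map_sub]
  rw [MvPowerSeries.coeff_mul_monomial]
  rw [coeff_Geom, MvPowerSeries.coeff_one]
  by_cases he : e = 0
  · subst he
    have h0 : (∃ n : ℕ, (0 : σ →₀ ℕ) = n • m) := ⟨0, by simp⟩
    rw [if_pos h0, if_pos rfl, if_neg]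
    · ring
    · intro hle
      exact hm (le_antisymm (by simpa using hle) (zero_le : 0 ≤ m))
  · rw [if_neg he]
    by_cases hle : m ≤ e
    · rw [if_pos hle, coeff_Geom]
      by_cases h1 : ∃ n : ℕ, e = n • m
      · obtain ⟨n, rfl⟩ := h1
        rcases n with _ | n
        · simp at he
        · have h2 : ((n+1) • m - m) = n • m := by
            rw [succ_nsmul]; exact add_tsub_cancel_right _ _
          have h3 : (∃ k:ℕ, (n+1) • m = k • m) := ⟨n+1, rfl⟩
          rw [h2, if_pos h3, if_pos (show ∃ k:ℕ, n • m = k • m from ⟨n, rfl⟩)]; ring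
      · rw [if_neg h1, if_neg, mul_one, sub_zero]
        rintro ⟨n, hn⟩
        exact h1 ⟨n + 1, by rw [succ_nsmul, ← hn, tsub_add_cancel_of_le hle]⟩
    · rw [if_neg hle, if_neg, sub_zero]
      rintro ⟨n, hn⟩
      rcases n with _ | n
      · exact he (by simpa using hn)
      · refine hle ?_
        rw [hn, succ_nsmul]
        exact le_add_self

lemma Geom_eq_inv (m : σ →₀ ℕ) (hm : m ≠ 0) :
    (1 - MvPowerSeries.monomial m 1 : MvPowerSeries σ ℚ)⁻¹ = Geom m := by
  rw [MvPowerSeries.inv_eq_iff_mul_eq_one]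
  · exact Geom_mul m hm
  · rw [map_sub, map_one]
    have : MvPowerSeries.constantCoeff (MvPowerSeries.monomial m (1 : ℚ)) = 0 := by
      rw [← MvPowerSeries.coeff_zero_eq_constantCoeff, MvPowerSeries.coeff_monomial, if_neg]
      exact fun h => hm h.symm
    rw [this]; norm_num

lemma prod_monomial_one {ι : Type*} (t : Finset ι) (u : ι → (σ →₀ ℕ)) :
    (∏ j ∈ t, MvPowerSeries.monomial (u j) (1 : ℚ)) =
      MvPowerSeries.monomial (∑ j ∈ t, u j) (1 : ℚ) := by
  induction t using Finset.induction_on with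
  | empty => simp [MvPowerSeries.monomial_zero_eq_C_apply]
  | insert _ _ h ih =>
      rw [Finset.prod_insert h, Finset.sum_insert h, ih,
        MvPowerSeries.monomial_mul_monomial, one_mul]

def mvec {p : ℕ} (π : Equiv.Perm (Fin p)) (i : ℕ) : (Fin p ⊕ Fin p) →₀ ℕ :=
  ∑ j ∈ Finset.univ.filter fun j : Fin p => i ≤ (j : ℕ),
    Finsupp.single (Sum.inl (π j)) 1

def yvec {p : ℕ} (r : Fin p → ℕ) : (Fin p ⊕ Fin p) →₀ ℕ :=
  ∑ x : Fin p, Finsupp.single (Sum.inr x) (r x)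

lemma xprod_eq {p : ℕ} (π : Equiv.Perm (Fin p)) (i : ℕ) :
    xprod π i = MvPowerSeries.monomial (mvec π i) 1 := by
  rw [xprod, mvec, ← prod_monomial_one]
  exact Finset.prod_congr rfl fun j _ => rfl

lemma yprod_eq {p : ℕ} (r : Fin p → ℕ) :
    yprod r = MvPowerSeries.monomial (yvec r) 1 := by
  rw [yprod, yvec, ← prod_monomial_one]
  exact Finset.prod_congr rfl fun j _ => MvPowerSeries.X_pow_eq _ _

lemma mvec_apply_inl {p : ℕ} (π : Equiv.Perm (Fin p)) (i : ℕ) (j : Fin p) :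
    mvec π i (Sum.inl (π j)) = if i ≤ (j : ℕ) then 1 else 0 := by
  rw [mvec, Finsupp.finset_sum_apply]
  by_cases hij : i ≤ (j : ℕ)
  · rw [if_pos hij, Finset.sum_eq_single_of_mem j (by simp [hij])]
    · simp
    · intro b _ hb
      rw [Finsupp.single_apply, if_neg]
      simp only [Sum.inl.injEq, EmbeddingLike.apply_eq_iff_eq]
      exact hb
  · rw [if_neg hij]
    apply Finset.sum_eq_zero
    intro b hb
    simp only [Finset.mem_filter, Finset.mem_univ, true_and] at hb
    rw [Finsupp.single_apply, if_neg]
    simp only [Sum.inl.injEq, EmbeddingLike.apply_eq_iff_eq]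
    intro h; subst h; exact hij hb

lemma mvec_apply_inr {p : ℕ} (π : Equiv.Perm (Fin p)) (i : ℕ) (x : Fin p) :
    mvec π i (Sum.inr x) = 0 := by
  rw [mvec, Finsupp.finset_sum_apply]
  exact Finset.sum_eq_zero fun b _ => by rw [Finsupp.single_apply, if_neg (by simp)]

lemma yvec_apply_inr {p : ℕ} (r : Fin p → ℕ) (x : Fin p) :
    yvec r (Sum.inr x) = r x := by
  rw [yvec, Finsupp.finset_sum_apply, Finset.sum_eq_single x]
  · simp
  · intro b _ hb
    rw [Finsupp.single_apply, if_neg (by simpa using hb)]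
  · simp

lemma yvec_apply_inl {p : ℕ} (r : Fin p → ℕ) (x : Fin p) :
    yvec r (Sum.inl x) = 0 := by
  rw [yvec, Finsupp.finset_sum_apply]
  exact Finset.sum_eq_zero fun b _ => by rw [Finsupp.single_apply, if_neg (by simp)]

lemma mvec_ne_zero {p : ℕ} (π : Equiv.Perm (Fin p)) (i : ℕ) (hi : i < p) :
    mvec π i ≠ 0 := by
  intro h
  have := mvec_apply_inl π i ⟨i, hi⟩
  rw [h, if_pos (le_refl _)] at this
  simp at this

lemma sum_smul_mvec_apply_inl {p : ℕ} (π : Equiv.Perm (Fin p)) (k : Fin p → ℕ) (j : Fin p) :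
    (∑ i : Fin p, k i • mvec π (i : ℕ)) (Sum.inl (π j)) =
      ∑ i ∈ Finset.univ.filter fun i : Fin p => (i : ℕ) ≤ (j : ℕ), k i := by
  rw [Finsupp.finset_sum_apply]
  rw [← Finset.sum_filter_add_sum_filter_not Finset.univ (fun i : Fin p => (i : ℕ) ≤ (j : ℕ))]
  have h1 : ∀ i ∈ Finset.univ.filter fun i : Fin p => (i : ℕ) ≤ (j : ℕ),
      (k i • mvec π (i : ℕ)) (Sum.inl (π j)) = k i := by
    intro i hi
    simp only [Finset.mem_filter, Finset.mem_univ, true_and] at hi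
    rw [Finsupp.smul_apply, mvec_apply_inl, if_pos hi, smul_eq_mul, mul_one]
  have h2 : ∀ i ∈ Finset.univ.filter fun i : Fin p => ¬ (i : ℕ) ≤ (j : ℕ),
      (k i • mvec π (i : ℕ)) (Sum.inl (π j)) = 0 := by
    intro i hi
    simp only [Finset.mem_filter, Finset.mem_univ, true_and] at hi
    rw [Finsupp.smul_apply, mvec_apply_inl, if_neg hi, smul_eq_mul, mul_zero]
  rw [Finset.sum_congr rfl h1, Finset.sum_congr rfl h2, Finset.sum_const_zero, add_zero]

lemma sum_smul_mvec_apply_inr {p : ℕ} (π : Equiv.Perm (Fin p)) (k : Fin p → ℕ) (x : Fin p) :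
    (∑ i : Fin p, k i • mvec π (i : ℕ)) (Sum.inr x) = 0 := by
  rw [Finsupp.finset_sum_apply]
  exact Finset.sum_eq_zero fun i _ => by
    rw [Finsupp.smul_apply, mvec_apply_inr, smul_eq_mul, mul_zero]

lemma partial_sum_inj {p : ℕ} (k k' : Fin p → ℕ)
    (h : ∀ j : Fin p, (∑ i ∈ Finset.univ.filter fun i : Fin p => (i : ℕ) ≤ (j : ℕ), k i) =
      ∑ i ∈ Finset.univ.filter fun i : Fin p => (i : ℕ) ≤ (j : ℕ), k' i) : k = k' := by
  have H : ∀ t : ℕ, ∀ j : Fin p, (j : ℕ) = t → k j = k' j := by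
    intro t
    induction t using Nat.strong_induction_on with
    | _ t IH =>
      intro j hj
      have h1 := h j
      have split : (Finset.univ.filter fun i : Fin p => (i : ℕ) ≤ (j : ℕ)) =
          insert j (Finset.univ.filter fun i : Fin p => (i : ℕ) < (j : ℕ)) := by
        ext i
        simp only [Finset.mem_filter, Finset.mem_univ, true_and, Finset.mem_insert, Fin.ext_iff]
        omega
      rw [split, Finset.sum_insert (by simp), Finset.sum_insert (by simp)] at h1
      have h2 : (∑ i ∈ Finset.univ.filter fun i : Fin p => (i : ℕ) < (j : ℕ), k i) =
          ∑ i ∈ Finset.univ.filter fun i : Fin p => (i : ℕ) < (j : ℕ), k' i := by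
        refine Finset.sum_congr rfl fun i hi => ?_
        simp only [Finset.mem_filter, Finset.mem_univ, true_and] at hi
        exact IH (i : ℕ) (by omega) i rfl
      omega
  funext j; exact H (j : ℕ) j rfl

lemma sum_smul_mvec_inj {p : ℕ} (π : Equiv.Perm (Fin p)) (k k' : Fin p → ℕ)
    (h : (∑ i : Fin p, k i • mvec π (i : ℕ)) = ∑ i : Fin p, k' i • mvec π (i : ℕ)) :
    k = k' := by
  refine partial_sum_inj k k' fun j => ?_
  rw [← sum_smul_mvec_apply_inl π k j, ← sum_smul_mvec_apply_inl π k' j, h]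

lemma coeff_prod_Geom {p : ℕ} (π : Equiv.Perm (Fin p)) (e : (Fin p ⊕ Fin p) →₀ ℕ) :
    MvPowerSeries.coeff e (∏ i : Fin p, (Geom (mvec π (i : ℕ)) : MvPowerSeries (Fin p ⊕ Fin p) ℚ)) =
      if ∃ k : Fin p → ℕ, (∑ i : Fin p, k i • mvec π (i : ℕ)) = e then 1 else 0 := by
  rw [MvPowerSeries.coeff_prod]
  have step1 : ∀ l : Fin p →₀ ((Fin p ⊕ Fin p) →₀ ℕ),
      (∏ i : Fin p, MvPowerSeries.coeff (l i) (Geom (mvec π (i : ℕ)))) =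
        if ∀ i : Fin p, ∃ n : ℕ, l i = n • mvec π (i : ℕ) then 1 else 0 := by
    intro l
    simp only [coeff_Geom]
    rw [Finset.prod_boole]
    simp
  rw [Finset.sum_congr rfl fun l _ => step1 l]
  rw [Finset.sum_boole]
  by_cases hk : ∃ k : Fin p → ℕ, (∑ i : Fin p, k i • mvec π (i : ℕ)) = e
  · obtain ⟨k, hke⟩ := hk
    set l₀ : Fin p →₀ ((Fin p ⊕ Fin p) →₀ ℕ) :=
      Finsupp.equivFunOnFinite.symm (fun i => k i • mvec π (i : ℕ)) with hl₀
    have hl₀app : ∀ i, l₀ i = k i • mvec π (i : ℕ) := fun i => rfl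
    have hfil : ((Finset.finsuppAntidiag Finset.univ e).filter
        fun l => ∀ i : Fin p, ∃ n : ℕ, l i = n • mvec π (i : ℕ)) = {l₀} := by
      apply Finset.eq_singleton_iff_unique_mem.2
      constructor
      · rw [Finset.mem_filter, Finset.mem_finsuppAntidiag]
        refine ⟨⟨?_, Finset.subset_univ _⟩, fun i => ⟨k i, hl₀app i⟩⟩
        rw [Finset.sum_congr rfl fun i _ => hl₀app i, hke]
      · intro l hl
        rw [Finset.mem_filter, Finset.mem_finsuppAntidiag] at hl
        obtain ⟨⟨hsum, -⟩, hall⟩ := hl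
        have kl : Fin p → ℕ := fun i => (hall i).choose
        have hkl : ∀ i, l i = (fun i => (hall i).choose) i • mvec π (i : ℕ) :=
          fun i => (hall i).choose_spec
        have : (∑ i : Fin p, (fun i => (hall i).choose) i • mvec π (i : ℕ)) = e := by
          rw [← Finset.sum_congr rfl fun i _ => hkl i, hsum]
        have hkk : (fun i => (hall i).choose) = k := sum_smul_mvec_inj π _ _ (by rw [this, hke])
        ext i c
        rw [hkl i, hkk, ← hl₀app i]
    rw [hfil]
    simp only [Finset.card_singleton, Nat.cast_one]
    rw [if_pos ⟨k, hke⟩]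
  · rw [if_neg hk]
    have : ((Finset.finsuppAntidiag Finset.univ e).filter
        fun l => ∀ i : Fin p, ∃ n : ℕ, l i = n • mvec π (i : ℕ)) = ∅ := by
      apply Finset.eq_empty_of_forall_notMem
      intro l hl
      rw [Finset.mem_filter, Finset.mem_finsuppAntidiag] at hl
      obtain ⟨⟨hsum, -⟩, hall⟩ := hl
      have hkl : ∀ i, l i = (fun i => (hall i).choose) i • mvec π (i : ℕ) :=
        fun i => (hall i).choose_spec
      exact hk ⟨fun i => (hall i).choose, by rw [← Finset.sum_congr rfl fun i _ => hkl i, hsum]⟩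
    rw [this]
    simp

def En {p : ℕ} (hp : 0 < p) (s : Fin p → ℕ) (π : Equiv.Perm (Fin p)) (r : Fin p → ℕ)
    (t : ℕ) : ℕ :=
  ((D2 hp s π r).filter (· ≤ t)).card

lemma D1_filter_zero {p : ℕ} (s : Fin p → ℕ) (π : Equiv.Perm (Fin p)) (r : Fin p → ℕ) :
    (D1 s π r).filter (· ≤ 0) = ∅ := by
  apply Finset.eq_empty_of_forall_notMem
  intro i hi
  simp only [D1, Finset.mem_filter, Finset.mem_Icc] at hi
  omega

lemma En_zero {p : ℕ} (hp : 0 < p) (s : Fin p → ℕ) (π : Equiv.Perm (Fin p)) (r : Fin p → ℕ) :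
    En hp s π r 0 = if r (π ⟨0, hp⟩) = 0 then 1 else 0 := by
  rw [En, D2]
  split_ifs with h
  · rw [Finset.filter_insert, if_pos le_rfl, D1_filter_zero, Finset.card_insert_of_notMem]
    · simp
    · simp
  · rw [D1_filter_zero]; simp

lemma En_succ {p : ℕ} (hp : 0 < p) (s : Fin p → ℕ) (π : Equiv.Perm (Fin p)) (r : Fin p → ℕ)
    (t : ℕ) (ht : t + 1 < p) :
    En hp s π r (t + 1) = En hp s π r t + (if IsDesc s π r (t + 1) then 1 else 0) := by
  have key : ∀ F : Finset ℕ, F.filter (· ≤ t + 1) =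
      if t + 1 ∈ F then insert (t + 1) (F.filter (· ≤ t)) else F.filter (· ≤ t) := by
    intro F
    split_ifs with h
    · ext i
      simp only [Finset.mem_filter, Finset.mem_insert]
      constructor
      · rintro ⟨hi, hle⟩
        rcases Nat.lt_or_ge i (t + 1) with h' | h'
        · exact Or.inr ⟨hi, by omega⟩
        · exact Or.inl (by omega)
      · rintro (rfl | ⟨hi, hle⟩)
        · exact ⟨h, le_rfl⟩
        · exact ⟨hi, by omega⟩
    · ext i
      simp only [Finset.mem_filter]
      constructor
      · rintro ⟨hi, hle⟩
        refine ⟨hi, ?_⟩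
        rcases Nat.lt_or_ge i (t + 1) with h' | h'
        · omega
        · exact absurd (by omega : i = t + 1) (fun he => h (he ▸ hi))
      · rintro ⟨hi, hle⟩; exact ⟨hi, by omega⟩
  have hmem : t + 1 ∈ D2 hp s π r ↔ IsDesc s π r (t + 1) := by
    rw [D2]
    have hd1 : t + 1 ∈ D1 s π r ↔ IsDesc s π r (t + 1) := by
      rw [D1, Finset.mem_filter, Finset.mem_Icc]
      constructor
      · exact fun h => h.2
      · exact fun h => ⟨⟨by omega, by omega⟩, h⟩
    split_ifs with h
    · rw [Finset.mem_insert, hd1]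
      constructor
      · rintro (h' | h')
        · omega
        · exact h'
      · exact fun h' => Or.inr h'
    · exact hd1
  rw [En, En, key]
  by_cases h1 : IsDesc s π r (t + 1)
  · rw [if_pos (hmem.2 h1), if_pos h1, Finset.card_insert_of_notMem (by simp)]
  · rw [if_neg (fun h => h1 (hmem.1 h)), if_neg h1, add_zero]

lemma sum_mvec_D2_apply_inl {p : ℕ} (hp : 0 < p) (s : Fin p → ℕ) (π : Equiv.Perm (Fin p))
    (r : Fin p → ℕ) (j : Fin p) :
    (∑ i ∈ D2 hp s π r, mvec π i) (Sum.inl (π j)) = En hp s π r (j : ℕ) := by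
  rw [Finsupp.finset_sum_apply, En]
  rw [Finset.sum_congr rfl fun i _ => mvec_apply_inl π i j]
  rw [← Finset.card_filter]

lemma sum_mvec_D2_apply_inr {p : ℕ} (hp : 0 < p) (s : Fin p → ℕ) (π : Equiv.Perm (Fin p))
    (r : Fin p → ℕ) (x : Fin p) :
    (∑ i ∈ D2 hp s π r, mvec π i) (Sum.inr x) = 0 := by
  rw [Finsupp.finset_sum_apply]
  exact Finset.sum_eq_zero fun i _ => mvec_apply_inr π i x

/-- The `ℕ`-indexed sequence of `x`-exponents along `π`. -/
def aseq {p : ℕ} (π : Equiv.Perm (Fin p)) (d : (Fin p ⊕ Fin p) →₀ ℕ) (t : ℕ) : ℕ :=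
  if h : t < p then d (Sum.inl (π ⟨t, h⟩)) else 0

/-- numeric description of which `d` get coefficient 1 from `τ = (π, r)` -/
def GoodN {p : ℕ} (hp : 0 < p) (s : Fin p → ℕ) (π : Equiv.Perm (Fin p)) (r : Fin p → ℕ)
    (d : (Fin p ⊕ Fin p) →₀ ℕ) : Prop :=
  (∀ x, d (Sum.inr x) = r x) ∧ (En hp s π r 0 ≤ aseq π d 0) ∧
    ∀ t, t + 1 < p → aseq π d t + En hp s π r (t + 1) ≤ aseq π d (t + 1) + En hp s π r t

lemma filter_le_succ_fin {p : ℕ} (t : ℕ) (ht : t + 1 < p) :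
    (Finset.univ.filter fun i : Fin p => (i : ℕ) ≤ t + 1) =
      insert (⟨t + 1, ht⟩ : Fin p)
        (Finset.univ.filter fun i : Fin p => (i : ℕ) ≤ t) := by
  ext i
  simp only [Finset.mem_filter, Finset.mem_univ, true_and, Finset.mem_insert, Fin.ext_iff]
  omega

lemma exists_k_iff_goodN {p : ℕ} (hp : 0 < p) (s : Fin p → ℕ) (π : Equiv.Perm (Fin p))
    (r : Fin p → ℕ) (d : (Fin p ⊕ Fin p) →₀ ℕ) :
    (∃ k : Fin p → ℕ,
        d = (yvec r + ∑ i ∈ D2 hp s π r, mvec π i) + ∑ i : Fin p, k i • mvec π (i : ℕ)) ↔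
      GoodN hp s π r d := by
  constructor
  · rintro ⟨k, hk⟩
    have hinr : ∀ x, d (Sum.inr x) = r x := by
      intro x
      rw [hk, Finsupp.add_apply, Finsupp.add_apply, yvec_apply_inr,
        sum_mvec_D2_apply_inr, sum_smul_mvec_apply_inr, add_zero, add_zero]
    have hinl : ∀ j : Fin p, d (Sum.inl (π j)) =
        En hp s π r (j : ℕ) +
          ∑ i ∈ Finset.univ.filter fun i : Fin p => (i : ℕ) ≤ (j : ℕ), k i := by
      intro j
      rw [hk, Finsupp.add_apply, Finsupp.add_apply, yvec_apply_inl,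
        sum_mvec_D2_apply_inl, sum_smul_mvec_apply_inl, zero_add]
    have ha : ∀ t (h : t < p), aseq π d t =
        En hp s π r t +
          ∑ i ∈ Finset.univ.filter fun i : Fin p => (i : ℕ) ≤ t, k i := by
      intro t h
      rw [aseq, dif_pos h]
      exact hinl ⟨t, h⟩
    refine ⟨hinr, ?_, ?_⟩
    · rw [ha 0 hp]; omega
    · intro t ht
      rw [ha t (by omega), ha (t + 1) ht]
      have hsub : (∑ i ∈ Finset.univ.filter fun i : Fin p => (i : ℕ) ≤ t, k i) ≤
          ∑ i ∈ Finset.univ.filter fun i : Fin p => (i : ℕ) ≤ t + 1, k i := by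
        apply Finset.sum_le_sum_of_subset
        intro i hi
        simp only [Finset.mem_filter, Finset.mem_univ, true_and] at hi ⊢
        omega
      omega
  · rintro ⟨hinr, h0, hchain⟩
    set kn : ℕ → ℕ := fun t =>
      if t = 0 then aseq π d 0 - En hp s π r 0
      else (aseq π d t + En hp s π r (t - 1)) - (aseq π d (t - 1) + En hp s π r t) with hkn
    have PS : ∀ t, t < p →
        En hp s π r t + (∑ i ∈ Finset.univ.filter fun i : Fin p => (i : ℕ) ≤ t, kn (i : ℕ)) =
          aseq π d t := by
      intro t
      induction t with
      | zero =>
        intro h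
        have : (Finset.univ.filter fun i : Fin p => (i : ℕ) ≤ 0) = {(⟨0, hp⟩ : Fin p)} := by
          ext i
          simp only [Finset.mem_filter, Finset.mem_univ, true_and, Finset.mem_singleton,
            Fin.ext_iff]
          omega
        rw [this, Finset.sum_singleton]
        have h0' : kn ((⟨0, hp⟩ : Fin p) : ℕ) = aseq π d 0 - En hp s π r 0 := by
          simp [hkn]
        rw [h0']
        omega
      | succ t IH =>
        intro h
        have ht : t < p := by omega
        have IH' := IH ht
        rw [filter_le_succ_fin t h, Finset.sum_insert (by simp)]
        have hch := hchain t h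
        have hkval : kn ((⟨t + 1, h⟩ : Fin p) : ℕ) =
            (aseq π d (t + 1) + En hp s π r t) - (aseq π d t + En hp s π r (t + 1)) := by
          simp only [hkn]
          norm_num
        rw [hkval]
        omega
    refine ⟨fun i => kn (i : ℕ), ?_⟩
    ext c
    rw [Finsupp.add_apply, Finsupp.add_apply]
    rcases c with z | x
    · set j : Fin p := π.symm z with hj
      have hz : z = π j := by rw [hj, Equiv.apply_symm_apply]
      rw [hz, yvec_apply_inl, sum_mvec_D2_apply_inl, sum_smul_mvec_apply_inl, zero_add]
      have := PS (j : ℕ) j.isLt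
      rw [aseq, dif_pos j.isLt] at this
      simp only [Fin.eta] at this
      omega
    · rw [yvec_apply_inr, sum_mvec_D2_apply_inr, sum_smul_mvec_apply_inr, add_zero, add_zero]
      exact hinr x

lemma term_coeff {p : ℕ} (hp : 0 < p) (s : Fin p → ℕ) (π : Equiv.Perm (Fin p))
    (r : Fin p → ℕ) (d : (Fin p ⊕ Fin p) →₀ ℕ) :
    MvPowerSeries.coeff d
        (yprod r * (∏ i ∈ D2 hp s π r, xprod π i) * ∏ i : Fin p, (1 - xprod π (i : ℕ))⁻¹) =
      if GoodN hp s π r d then 1 else 0 := by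
  have h1 : (∏ i : Fin p, (1 - xprod π (i : ℕ))⁻¹ : MvPowerSeries (Fin p ⊕ Fin p) ℚ) =
      ∏ i : Fin p, Geom (mvec π (i : ℕ)) := by
    refine Finset.prod_congr rfl fun i _ => ?_
    rw [xprod_eq, Geom_eq_inv _ (mvec_ne_zero π (i : ℕ) i.isLt)]
  have h2 : (∏ i ∈ D2 hp s π r, xprod π i) =
      MvPowerSeries.monomial (∑ i ∈ D2 hp s π r, mvec π i) 1 := by
    rw [← prod_monomial_one]
    exact Finset.prod_congr rfl fun i _ => xprod_eq π i
  rw [h1, h2, yprod_eq, MvPowerSeries.monomial_mul_monomial, one_mul]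
  set w : (Fin p ⊕ Fin p) →₀ ℕ := yvec r + ∑ i ∈ D2 hp s π r, mvec π i with hw
  rw [MvPowerSeries.coeff_monomial_mul]
  rw [← exists_k_iff_goodN hp s π r d]
  by_cases h : ∃ k : Fin p → ℕ, d = w + ∑ i : Fin p, k i • mvec π (i : ℕ)
  · obtain ⟨k, hk⟩ := h
    have hwd : w ≤ d := by rw [hk]; exact le_add_of_nonneg_right zero_le
    rw [if_pos hwd, one_mul, coeff_prod_Geom, if_pos, if_pos]
    · exact ⟨k, hk⟩
    · exact ⟨k, by rw [hk, add_tsub_cancel_left]⟩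
  · rw [if_neg h]
    split_ifs with hwd
    · rw [one_mul, coeff_prod_Geom, if_neg]
      rintro ⟨k, hks⟩
      exact h ⟨k, by rw [hks, add_tsub_cancel_of_le hwd]⟩
    · rfl

lemma obs_le {q1 q2 : ℕ} {r1 r2 : ℚ} (h10 : 0 ≤ r1) (h11 : r1 < 1) (h20 : 0 ≤ r2) (h21 : r2 < 1) :
    ((q1 : ℚ) + r1 ≤ (q2 : ℚ) + r2) ↔ (q1 < q2 ∨ (q1 = q2 ∧ r1 ≤ r2)) := by
  constructor
  · intro h
    rcases lt_trichotomy q1 q2 with hq | hq | hq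
    · exact Or.inl hq
    · exact Or.inr ⟨hq, by rw [hq] at h; linarith⟩
    · exfalso
      have : (q2 : ℚ) + 1 ≤ (q1 : ℚ) := by exact_mod_cast hq
      linarith
  · rintro (hq | ⟨rfl, hr⟩)
    · have : (q1 : ℚ) + 1 ≤ (q2 : ℚ) := by exact_mod_cast hq
      linarith
    · linarith

lemma obs_lt {q1 q2 : ℕ} {r1 r2 : ℚ} (h10 : 0 ≤ r1) (h11 : r1 < 1) (h20 : 0 ≤ r2) (h21 : r2 < 1) :
    ((q1 : ℚ) + r1 < (q2 : ℚ) + r2) ↔ (q1 < q2 ∨ (q1 = q2 ∧ r1 < r2)) := by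
  constructor
  · intro h
    rcases lt_trichotomy q1 q2 with hq | hq | hq
    · exact Or.inl hq
    · exact Or.inr ⟨hq, by rw [hq] at h; linarith⟩
    · exfalso
      have : (q2 : ℚ) + 1 ≤ (q1 : ℚ) := by exact_mod_cast hq
      linarith
  · rintro (hq | ⟨rfl, hr⟩)
    · have : (q1 : ℚ) + 1 ≤ (q2 : ℚ) := by exact_mod_cast hq
      linarith
    · linarith

/-- the candidate partition attached to `d` -/
def fnat {p : ℕ} (s : Fin p → ℕ) (d : (Fin p ⊕ Fin p) →₀ ℕ) (x : Fin p) : ℕ :=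
  d (Sum.inl x) * s x + d (Sum.inr x)

/-- the ratio function `f₀(x)/s(x)` -/
def gq {p : ℕ} (s : Fin p → ℕ) (d : (Fin p ⊕ Fin p) →₀ ℕ) (x : Fin p) : ℚ :=
  (fnat s d x : ℚ) / (s x : ℚ)

lemma gq_eq {p : ℕ} (s : Fin p → ℕ) (hs : ∀ x, 0 < s x) (d : (Fin p ⊕ Fin p) →₀ ℕ)
    (x : Fin p) : gq s d x = (d (Sum.inl x) : ℚ) + (d (Sum.inr x) : ℚ) / (s x : ℚ) := by
  have h : (s x : ℚ) ≠ 0 := by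
    have := hs x; positivity
  rw [gq, fnat]
  push_cast
  field_simp

lemma isDesc_succ_iff {p : ℕ} (s : Fin p → ℕ) (π : Equiv.Perm (Fin p)) (r : Fin p → ℕ)
    (t : ℕ) (ht : t + 1 < p) :
    IsDesc s π r (t + 1) ↔
      ((π ⟨t, by omega⟩ < π ⟨t + 1, ht⟩ ∧
          (r (π ⟨t, by omega⟩) : ℚ) / (s (π ⟨t, by omega⟩) : ℚ) >
            (r (π ⟨t + 1, ht⟩) : ℚ) / (s (π ⟨t + 1, ht⟩) : ℚ)) ∨
        (π ⟨t + 1, ht⟩ < π ⟨t, by omega⟩ ∧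
          (r (π ⟨t, by omega⟩) : ℚ) / (s (π ⟨t, by omega⟩) : ℚ) ≥
            (r (π ⟨t + 1, ht⟩) : ℚ) / (s (π ⟨t + 1, ht⟩) : ℚ))) := by
  constructor
  · rintro ⟨h1, h2, h⟩
    exact h
  · intro h
    exact ⟨by omega, ht, h⟩

lemma chain_step {p : ℕ} (hp : 0 < p) (s : Fin p → ℕ) (hs : ∀ x, 0 < s x)
    (π : Equiv.Perm (Fin p)) (r : Fin p → ℕ) (hr : ∀ x, r x < s x)
    (d : (Fin p ⊕ Fin p) →₀ ℕ) (hinr : ∀ x, d (Sum.inr x) = r x)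
    (t : ℕ) (htp : t < p) (ht : t + 1 < p) :
    (aseq π d t + En hp s π r (t + 1) ≤ aseq π d (t + 1) + En hp s π r t) ↔
      (gq s d (π ⟨t, htp⟩) ≤ gq s d (π ⟨t + 1, ht⟩) ∧
        (gq s d (π ⟨t, htp⟩) = gq s d (π ⟨t + 1, ht⟩) →
          π ⟨t, htp⟩ < π ⟨t + 1, ht⟩)) := by
  set x : Fin p := π ⟨t, htp⟩ with hxdef
  set y : Fin p := π ⟨t + 1, ht⟩ with hydef
  have hne : x ≠ y := by
    intro h
    have := π.injective h
    simp [Fin.ext_iff] at this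
  set qx : ℕ := d (Sum.inl x) with hqx
  set qy : ℕ := d (Sum.inl y) with hqy
  set ρx : ℚ := (r x : ℚ) / (s x : ℚ) with hρx
  set ρy : ℚ := (r y : ℚ) / (s y : ℚ) with hρy
  have hsx : (0 : ℚ) < s x := by exact_mod_cast hs x
  have hsy : (0 : ℚ) < s y := by exact_mod_cast hs y
  have h0x : 0 ≤ ρx := by positivity
  have h0y : 0 ≤ ρy := by positivity
  have h1x : ρx < 1 := by
    rw [hρx, div_lt_one hsx]; exact_mod_cast hr x
  have h1y : ρy < 1 := by
    rw [hρy, div_lt_one hsy]; exact_mod_cast hr y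
  have hgx : gq s d x = (qx : ℚ) + ρx := by
    rw [gq_eq s hs d x, hinr x]
  have hgy : gq s d y = (qy : ℚ) + ρy := by
    rw [gq_eq s hs d y, hinr y]
  have hax : aseq π d t = qx := by rw [aseq, dif_pos htp]
  have hay : aseq π d (t + 1) = qy := by rw [aseq, dif_pos ht]
  rw [En_succ hp s π r t ht, hax, hay, hgx, hgy]
  have hdesc := isDesc_succ_iff s π r t ht
  rcases lt_trichotomy x y with hxy | hxy | hxy
  · have hnyx : ¬ y < x := not_lt.2 hxy.le
    by_cases hρ : ρy < ρx
    · rw [if_pos (hdesc.2 (Or.inl ⟨hxy, hρ⟩)), obs_le h0x h1x h0y h1y]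
      constructor
      · intro h
        exact ⟨Or.inl (by omega), fun _ => hxy⟩
      · rintro ⟨(h | ⟨he, hle⟩), -⟩
        · omega
        · exact absurd hρ (not_lt.2 hle)
    · have hnd : ¬ IsDesc s π r (t + 1) := by
        rw [hdesc]
        rintro (⟨-, h⟩ | ⟨h, -⟩)
        · exact hρ h
        · exact hnyx h
      rw [if_neg hnd, obs_le h0x h1x h0y h1y]
      constructor
      · intro h
        refine ⟨?_, fun _ => hxy⟩
        rcases Nat.lt_or_ge qx qy with h' | h'
        · exact Or.inl h'
        · exact Or.inr ⟨by omega, not_lt.1 hρ⟩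
      · rintro ⟨(h | ⟨he, hle⟩), -⟩ <;> omega
  · exact absurd hxy hne
  · have hnxy : ¬ x < y := not_lt.2 hxy.le
    by_cases hρ : ρy ≤ ρx
    · rw [if_pos (hdesc.2 (Or.inr ⟨hxy, hρ⟩)), obs_le h0x h1x h0y h1y]
      constructor
      · intro h
        refine ⟨Or.inl (by omega), fun he => ?_⟩
        exfalso
        have hc : (qx : ℚ) + 1 ≤ (qy : ℚ) := by exact_mod_cast (by omega : qx + 1 ≤ qy)
        linarith
      · rintro ⟨(h | ⟨he, hle⟩), htie⟩
        · omega
        · exfalso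
          have hee : ρx = ρy := le_antisymm hle hρ
          exact hnxy (htie (by rw [he, hee]))
    · have hnd : ¬ IsDesc s π r (t + 1) := by
        rw [hdesc]
        rintro (⟨h, -⟩ | ⟨-, h⟩)
        · exact hnxy h
        · exact hρ h
      rw [if_neg hnd, obs_le h0x h1x h0y h1y]
      have hρ2 : ρx < ρy := not_le.1 hρ
      constructor
      · intro h
        refine ⟨?_, fun he => ?_⟩
        · rcases Nat.lt_or_ge qx qy with h' | h'
          · exact Or.inl h'
          · exact Or.inr ⟨by omega, hρ2.le⟩
        · exfalso
          have hc : (qx : ℚ) ≤ (qy : ℚ) := by exact_mod_cast (by omega : qx ≤ qy)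
          linarith
      · rintro ⟨(h | ⟨he, -⟩), -⟩ <;> omega

lemma En0_iff {p : ℕ} (hp : 0 < p) (s : Fin p → ℕ) (hs : ∀ x, 0 < s x)
    (π : Equiv.Perm (Fin p)) (r : Fin p → ℕ)
    (d : (Fin p ⊕ Fin p) →₀ ℕ) (hinr : ∀ x, d (Sum.inr x) = r x) :
    (En hp s π r 0 ≤ aseq π d 0) ↔ 0 < fnat s d (π ⟨0, hp⟩) := by
  rw [En_zero, aseq, dif_pos hp, fnat]
  set x : Fin p := π ⟨0, hp⟩
  rw [hinr x]
  have hsx := hs x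
  by_cases h : r x = 0
  · rw [if_pos h, h, add_zero]
    constructor
    · intro h1
      exact Nat.mul_pos (by omega) hsx
    · intro h1
      by_contra h2
      have : d (Sum.inl x) = 0 := by omega
      rw [this] at h1
      simp at h1
  · rw [if_neg h]
    exact ⟨fun _ => by omega, fun _ => Nat.zero_le _⟩

lemma consec_global {n : ℕ} (f : Fin n → ℚ) (σ : Equiv.Perm (Fin n))
    (consec : ∀ t (htp : t < n) (ht : t + 1 < n),
      f ⟨t, htp⟩ ≤ f ⟨t + 1, ht⟩ ∧ (f ⟨t, htp⟩ = f ⟨t + 1, ht⟩ → σ ⟨t, htp⟩ < σ ⟨t + 1, ht⟩)) :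
    Monotone f ∧ ∀ i j : Fin n, i < j → f i = f j → σ i < σ j := by
  have step : ∀ m : ℕ, ∀ i j : Fin n, (j : ℕ) = (i : ℕ) + m → f i ≤ f j := by
    intro m
    induction m with
    | zero =>
      intro i j h
      have : i = j := Fin.ext (by omega)
      rw [this]
    | succ m IH =>
      intro i j h
      have hj2 := j.isLt
      have hm : (i : ℕ) + m < n := by omega
      have hj : (i : ℕ) + m + 1 < n := by omega
      have h1 : f i ≤ f ⟨(i : ℕ) + m, hm⟩ := IH i _ rfl
      have h2 : f ⟨(i : ℕ) + m, hm⟩ ≤ f ⟨(i : ℕ) + m + 1, hj⟩ := (consec _ hm hj).1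
      have he : j = ⟨(i : ℕ) + m + 1, hj⟩ := Fin.ext (by simp only [Fin.val_mk]; omega)
      rw [he]
      exact h1.trans h2
  have hmono : Monotone f := by
    intro i j hij
    exact step ((j : ℕ) - (i : ℕ)) i j (by omega)
  refine ⟨hmono, ?_⟩
  have step2 : ∀ m : ℕ, ∀ i j : Fin n, (j : ℕ) = (i : ℕ) + m + 1 → f i = f j → σ i < σ j := by
    intro m
    induction m with
    | zero =>
      intro i j h hf
      have hj2 := j.isLt
      have ht : (i : ℕ) + 1 < n := by omega
      have hj : j = ⟨(i : ℕ) + 1, ht⟩ := Fin.ext (by simp only [Fin.val_mk]; omega)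
      have hcc := (consec (i : ℕ) i.isLt ht).2
      simp only [Fin.eta] at hcc
      rw [hj]
      exact hcc (by rw [← hj]; exact hf)
    | succ m IH =>
      intro i j h hf
      have hj2 := j.isLt
      have hm1 : (i : ℕ) + m + 1 < n := by omega
      have hm2 : (i : ℕ) + m + 1 + 1 < n := by omega
      set jm : Fin n := ⟨(i : ℕ) + m + 1, hm1⟩ with hjm
      have h1 : f i ≤ f jm := step (m + 1) i jm rfl
      have h2 : f jm ≤ f j := step 1 jm j (by simp only [hjm, Fin.val_mk]; omega)
      have hf1 : f i = f jm := le_antisymm h1 (by rw [hf]; exact h2)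
      have hf2 : f jm = f j := by rw [← hf, ← hf1]
      have ha : σ i < σ jm := IH i jm rfl hf1
      have hcc := (consec ((i : ℕ) + m + 1) hm1 hm2).2
      have hje : j = ⟨(i : ℕ) + m + 1 + 1, hm2⟩ := Fin.ext (by simp only [Fin.val_mk]; omega)
      have hb : σ jm < σ j := by
        rw [hje]
        exact hcc (by rw [← hje]; exact hf2)
      exact ha.trans hb
  intro i j hij hf
  exact step2 ((j : ℕ) - (i : ℕ) - 1) i j (by have := hij; rw [Fin.lt_iff_val_lt_val] at this; omega) hf

def Valid {p : ℕ} (P : PartialOrder (Fin p)) (s : Fin p → ℕ) (d : (Fin p ⊕ Fin p) →₀ ℕ) :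
    Prop :=
  (∀ x, d (Sum.inr x) < s x) ∧ IsLHPart P s (fnat s d) ∧ ∀ x, 0 < fnat s d x

lemma plt_of_ple_ne {α : Type*} (P : PartialOrder α) {a b : α} (h : P.le a b) (hne : a ≠ b) :
    P.lt a b := @lt_of_le_of_ne α P a b h hne

lemma ple_of_plt {α : Type*} (P : PartialOrder α) {a b : α} (h : P.lt a b) : P.le a b :=
  @le_of_lt α P.toPreorder a b h

lemma pne_of_plt {α : Type*} (P : PartialOrder α) {a b : α} (h : P.lt a b) : a ≠ b :=
  @ne_of_lt α P.toPreorder a b h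

lemma fin_le_of_lt {n : ℕ} {a b : Fin n} (h : a < b) : a ≤ b := le_of_lt h

lemma fin_lt_of_le_ne {n : ℕ} {a b : Fin n} (h : a ≤ b) (hne : a ≠ b) : a < b := by
  rw [Fin.lt_def]
  rw [Fin.le_def] at h
  rcases Nat.lt_or_ge (a : ℕ) (b : ℕ) with h' | h'
  · exact h'
  · exact absurd (Fin.ext (by omega)) hne

lemma good_implies {p : ℕ} (hp : 0 < p) (P : PartialOrder (Fin p)) (s : Fin p → ℕ)
    (hs : ∀ x, 0 < s x) (π : Equiv.Perm (Fin p)) (rbar : ∀ x : Fin p, Fin (s x))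
    (d : (Fin p ⊕ Fin p) →₀ ℕ) (hLE : π ∈ LinExt P)
    (hG : GoodN hp s π (fun x => (rbar x : ℕ)) d) :
    Valid P s d ∧ π = Tuple.sort (gq s d) := by
  obtain ⟨hinr, h0, hchain⟩ := hG
  set r : Fin p → ℕ := fun x => (rbar x : ℕ) with hrdef
  have hr : ∀ x, r x < s x := fun x => (rbar x).isLt
  have consec : ∀ t (htp : t < p) (ht : t + 1 < p),
      gq s d (π ⟨t, htp⟩) ≤ gq s d (π ⟨t + 1, ht⟩) ∧
        (gq s d (π ⟨t, htp⟩) = gq s d (π ⟨t + 1, ht⟩) → π ⟨t, htp⟩ < π ⟨t + 1, ht⟩) :=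
    fun t htp ht => (chain_step hp s hs π r hr d hinr t htp ht).1 (hchain t ht)
  obtain ⟨hmono, hties⟩ :=
    consec_global (fun j => gq s d (π j)) π (fun t htp ht => consec t htp ht)
  have hsort : π = Tuple.sort (gq s d) := by
    rw [Tuple.eq_sort_iff]
    exact ⟨hmono, fun i j hij he => hties i j hij he⟩
  have hpos0 : 0 < fnat s d (π ⟨0, hp⟩) := (En0_iff hp s hs π r d hinr).1 h0
  have hgpos : ∀ x, 0 < fnat s d x := by
    intro x
    have h1 : gq s d (π ⟨0, hp⟩) ≤ gq s d x := by
      have hx : x = π (π.symm x) := (π.apply_symm_apply x).symm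
      rw [hx]
      exact hmono (by rw [Fin.le_def]; simp)
    have h2 : 0 < gq s d (π ⟨0, hp⟩) :=
      div_pos (by exact_mod_cast hpos0) (by exact_mod_cast hs _)
    by_contra hc
    have hz : fnat s d x = 0 := by omega
    have : gq s d x = 0 := by rw [gq, hz]; simp
    linarith
  have hLH : IsLHPart P s (fnat s d) := by
    have key : ∀ x y, P.lt x y → π.symm x < π.symm y := by
      intro x y hxy
      have hle : P.le x y := ple_of_plt P hxy
      have hne : x ≠ y := pne_of_plt P hxy
      have h1 : π.symm x ≤ π.symm y := by
        apply hLE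
        rw [π.apply_symm_apply, π.apply_symm_apply]
        exact hle
      exact fin_lt_of_le_ne h1 (fun he => hne (by
        rw [← π.apply_symm_apply x, he, π.apply_symm_apply]))
    constructor
    · intro x y hxy
      have h1 : gq s d (π (π.symm x)) ≤ gq s d (π (π.symm y)) := hmono (fin_le_of_lt (key x y hxy))
      simp only [Equiv.apply_symm_apply] at h1
      exact h1
    · intro x y hxy hyx
      have hsymmlt := key x y hxy
      have h1 : gq s d (π (π.symm x)) ≤ gq s d (π (π.symm y)) := hmono (fin_le_of_lt hsymmlt)
      simp only [Equiv.apply_symm_apply] at h1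
      rcases eq_or_lt_of_le h1 with he | hlt
      · exfalso
        have h3 := hties (π.symm x) (π.symm y) hsymmlt
          (by simp only [Equiv.apply_symm_apply]; exact he)
        simp only [Equiv.apply_symm_apply] at h3
        exact absurd hyx (not_lt.2 (fin_le_of_lt h3))
      · exact hlt
  exact ⟨⟨fun x => by rw [hinr x]; exact hr x, hLH, hgpos⟩, hsort⟩

lemma valid_implies {p : ℕ} (hp : 0 < p) (P : PartialOrder (Fin p)) (s : Fin p → ℕ)
    (hs : ∀ x, 0 < s x) (d : (Fin p ⊕ Fin p) →₀ ℕ) (hV : Valid P s d) :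
    Tuple.sort (gq s d) ∈ LinExt P ∧
      GoodN hp s (Tuple.sort (gq s d)) (fun x => d (Sum.inr x)) d := by
  obtain ⟨hrlt, hLH, hpos⟩ := hV
  set π := Tuple.sort (gq s d) with hπ
  obtain ⟨hmono, hties⟩ := (Tuple.eq_sort_iff (f := gq s d) (σ := π)).1 hπ
  have hLinExt : π ∈ LinExt P := by
    intro i j hij
    by_contra hc
    push_neg at hc
    have hne : π i ≠ π j := by
      intro he
      have h' := π.injective he
      rw [h'] at hc
      exact Nat.lt_irrefl _ (Fin.lt_def.1 hc)
    have hlt : P.lt (π i) (π j) := plt_of_ple_ne P hij hne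
    have h1 : gq s d (π i) ≤ gq s d (π j) := hLH.1 _ _ hlt
    have h2 : gq s d (π j) ≤ gq s d (π i) := hmono (fin_le_of_lt hc)
    have he : gq s d (π j) = gq s d (π i) := le_antisymm h2 h1
    have h3 : π j < π i := hties j i hc he
    have h4 : gq s d (π i) < gq s d (π j) := hLH.2 _ _ hlt h3
    rw [he] at h4
    exact lt_irrefl _ h4
  refine ⟨hLinExt, fun x => rfl, ?_, ?_⟩
  · exact (En0_iff hp s hs π _ d (fun _ => rfl)).2 (hpos _)
  · intro t ht
    refine (chain_step hp s hs π _ (fun x => hrlt x) d (fun _ => rfl) t (by omega) ht).2 ?_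
    constructor
    · exact hmono (Fin.mk_le_mk.2 (by omega))
    · exact fun he => hties _ _ (Fin.mk_lt_mk.2 (by omega)) he


/-- The generating function `F⁺_{(P,s)}(x,y) = ∑_{f ∈ ℤ₊(P,s)} y^{r(f)} x^{q(f)}` equals
`∑_{τ=(π,r) ∈ L(P,s)} y^r ∏_{i ∈ D₂(τ)} x_{π_{i+1}} ⋯ x_{π_p} / ∏_{i ∈ [p]} (1 - x_{π_i} ⋯ x_{π_p})`,
where for `i = 0` the numerator factor is `x_{π_1} ⋯ x_{π_p}`. The left-hand side is
described coefficientwise. -/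
theorem Fplus_eq_sum_over_colored_linear_extensions {p : ℕ} (hp : 0 < p)
    (P : PartialOrder (Fin p)) (s : Fin p → ℕ) (hs : ∀ x, 0 < s x) :
    ∀ d : (Fin p ⊕ Fin p) →₀ ℕ,
      MvPowerSeries.coeff d
          (∑ τ ∈ LPs P s,
            yprod (fun x => (τ.2 x : ℕ)) *
              (∏ i ∈ D2 hp s τ.1 fun x => (τ.2 x : ℕ), xprod τ.1 i) *
              ∏ i : Fin p, (1 - xprod τ.1 (i : ℕ))⁻¹) =
        (Set.ncard {f : Fin p → ℕ | IsLHPart P s f ∧ (∀ x, 0 < f x) ∧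
          ∀ x, f x / s x = d (Sum.inl x) ∧ f x % s x = d (Sum.inr x)} : ℚ) := by
  intro d
  rw [map_sum]
  rw [Finset.sum_congr rfl (fun τ _ => term_coeff hp s τ.1 (fun x => (τ.2 x : ℕ)) d)]
  rw [Finset.sum_boole]
  have hSet : {f : Fin p → ℕ | IsLHPart P s f ∧ (∀ x, 0 < f x) ∧
      ∀ x, f x / s x = d (Sum.inl x) ∧ f x % s x = d (Sum.inr x)} =
      if Valid P s d then {fnat s d} else ∅ := by
    split_ifs with hV
    · ext f
      simp only [Set.mem_setOf_eq, Set.mem_singleton_iff]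
      constructor
      · rintro ⟨hLH, hpos, hdm⟩
        funext x
        have e1 := Nat.div_add_mod (f x) (s x)
        rw [(hdm x).1, (hdm x).2] at e1
        have e2 : fnat s d x = s x * d (Sum.inl x) + d (Sum.inr x) := by rw [fnat, mul_comm]
        omega
      · rintro rfl
        refine ⟨hV.2.1, hV.2.2, fun x => ⟨?_, ?_⟩⟩
        · have e2 : fnat s d x = s x * d (Sum.inl x) + d (Sum.inr x) := by
            rw [fnat, mul_comm]
          rw [e2, Nat.mul_add_div (hs x), Nat.div_eq_of_lt (hV.1 x), add_zero]
        · have e2 : fnat s d x = s x * d (Sum.inl x) + d (Sum.inr x) := by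
            rw [fnat, mul_comm]
          rw [e2, Nat.mul_add_mod, Nat.mod_eq_of_lt (hV.1 x)]
    · ext f
      simp only [Set.mem_setOf_eq, Set.mem_empty_iff_false, iff_false]
      rintro ⟨hLH, hpos, hdm⟩
      apply hV
      have hfe : f = fnat s d := by
        funext x
        have e1 := Nat.div_add_mod (f x) (s x)
        rw [(hdm x).1, (hdm x).2] at e1
        have e2 : fnat s d x = s x * d (Sum.inl x) + d (Sum.inr x) := by rw [fnat, mul_comm]
        omega
      refine ⟨fun x => ?_, hfe ▸ hLH, hfe ▸ hpos⟩
      rw [← (hdm x).2]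
      exact Nat.mod_lt _ (hs x)
  rw [hSet]
  by_cases hV : Valid P s d
  · obtain ⟨hLin, hGood⟩ := valid_implies hp P s hs d hV
    have hfil : (LPs P s).filter (fun τ => GoodN hp s τ.1 (fun x => (τ.2 x : ℕ)) d) =
        {(Tuple.sort (gq s d), fun x => (⟨d (Sum.inr x), hV.1 x⟩ : Fin (s x)))} := by
      apply Finset.eq_singleton_iff_unique_mem.2
      constructor
      · rw [Finset.mem_filter]
        refine ⟨?_, ?_⟩
        · rw [LPs, Finset.mem_filter]
          exact ⟨Finset.mem_univ _, hLin⟩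
        · exact hGood
      · intro τ hτ
        rw [Finset.mem_filter] at hτ
        obtain ⟨hmem, hG⟩ := hτ
        rw [LPs, Finset.mem_filter] at hmem
        obtain ⟨hVd, hsorteq⟩ := good_implies hp P s hs τ.1 τ.2 d hmem.2 hG
        apply Prod.ext
        · exact hsorteq
        · funext x
          apply Fin.ext
          exact (hG.1 x).symm
    rw [hfil, if_pos hV]
    simp
  · have hfil : (LPs P s).filter (fun τ => GoodN hp s τ.1 (fun x => (τ.2 x : ℕ)) d) = ∅ := by
      apply Finset.eq_empty_of_forall_notMem
      intro τ hτ
      rw [Finset.mem_filter] at hτ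
      obtain ⟨hmem, hG⟩ := hτ
      rw [LPs, Finset.mem_filter] at hmem
      exact hV (good_implies hp P s hs τ.1 τ.2 d hmem.2 hG).1
    rw [hfil, if_neg hV]
    simp
end
end

section
/- Let P be a labeled poset on [p] and s : [p] → ℤ₊. Then, as formal power series in t over ℤ, (1−t)^{p+1} · ∑_{n≥0} |ℕ_{≤n}(P,s)| t^n = ∑_{τ ∈ L(P,s)} t^{des_s(τ)}. In particular the (P,s)-Eulerian polynomial A_{(P,s)}(t) equals the generating polynomial of the statistic des_s over L(P,s). -/
open scoped Classical

noncomputable section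

namespace LHaux

lemma K1 {g1 g2 : ℕ} {ρ1 ρ2 : ℚ} (h0 : 0 ≤ ρ1) (h21 : ρ2 < 1) (h : ρ1 ≤ ρ2) :
    (g1:ℚ) + ρ1 ≤ (g2:ℚ) + ρ2 ↔ g1 ≤ g2 := by
  constructor
  · intro h'
    have h'' : (g1:ℚ) < (g2:ℚ) + 1 := by linarith
    have : g1 < g2 + 1 := by exact_mod_cast h''
    omega
  · intro h'
    have : (g1:ℚ) ≤ g2 := by exact_mod_cast h'
    linarith

lemma K2 {g1 g2 : ℕ} {ρ1 ρ2 : ℚ} (h11 : ρ1 < 1) (h20 : 0 ≤ ρ2) (h : ρ2 < ρ1) :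
    (g1:ℚ) + ρ1 ≤ (g2:ℚ) + ρ2 ↔ g1 < g2 := by
  constructor
  · intro h'
    have h'' : (g1:ℚ) < (g2:ℚ) := by linarith
    exact_mod_cast h''
  · intro h'
    have : (g1:ℚ) + 1 ≤ g2 := by exact_mod_cast h'
    linarith

lemma K3 {g1 g2 : ℕ} {ρ1 ρ2 : ℚ} (h0 : 0 ≤ ρ1) (h21 : ρ2 < 1) (h : ρ1 < ρ2) :
    (g1:ℚ) + ρ1 < (g2:ℚ) + ρ2 ↔ g1 ≤ g2 := by
  constructor
  · intro h'
    have h'' : (g1:ℚ) < (g2:ℚ) + 1 := by linarith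
    have : g1 < g2 + 1 := by exact_mod_cast h''
    omega
  · intro h'
    have : (g1:ℚ) ≤ g2 := by exact_mod_cast h'
    linarith

lemma K4 {g1 g2 : ℕ} {ρ1 ρ2 : ℚ} (h11 : ρ1 < 1) (h20 : 0 ≤ ρ2) (h : ρ2 ≤ ρ1) :
    (g1:ℚ) + ρ1 < (g2:ℚ) + ρ2 ↔ g1 < g2 := by
  constructor
  · intro h'
    have h'' : (g1:ℚ) < (g2:ℚ) := by linarith
    exact_mod_cast h''
  · intro h'
    have : (g1:ℚ) + 1 ≤ g2 := by exact_mod_cast h'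
    linarith


variable {p : ℕ} (P : PartialOrder (Fin p)) (s : Fin p → ℕ) (π : Equiv.Perm (Fin p))
  (r : Fin p → ℕ)

/-- fractional part `r x / s x`. -/
def rho (x : Fin p) : ℚ := (r x : ℚ) / (s x : ℚ)

/-- the statistic `f x / s x`. -/
def ratio (f : Fin p → ℕ) (x : Fin p) : ℚ := (f x : ℚ) / (s x : ℚ)

lemma rho_nonneg (x : Fin p) : 0 ≤ rho s r x := by
  unfold rho; positivity

lemma rho_lt_one (hs : ∀ x, 0 < s x) (hr : ∀ x, r x < s x) (x : Fin p) : rho s r x < 1 := by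
  unfold rho
  rw [div_lt_one (by exact_mod_cast hs x)]
  exact_mod_cast hr x

lemma rho_eq_zero_iff (hs : ∀ x, 0 < s x) (x : Fin p) : rho s r x = 0 ↔ r x = 0 := by
  unfold rho
  rw [div_eq_zero_iff]
  constructor
  · rintro (h | h)
    · exact_mod_cast h
    · exact absurd h (by have := hs x; positivity)
  · intro h; left; exact_mod_cast h

/-- the `(P,s)`-partition associated to `(π, r)` and a chain `g`. -/
def Phi (g : Fin p → ℕ) : Fin p → ℕ := fun x => s x * g (π.symm x) + r x

def dsc (i : ℕ) : ℕ := if IsDesc s π r i then 1 else 0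

lemma ratio_decomp (hs : ∀ x, 0 < s x) (f : Fin p → ℕ) (g : Fin p → ℕ)
    (hfg : ∀ x, f x = s x * g (π.symm x) + r x) (x : Fin p) :
    ratio s f x = (g (π.symm x) : ℚ) + rho s r x := by
  have hsx : (s x : ℚ) ≠ 0 := by exact_mod_cast (hs x).ne'
  unfold ratio rho
  rw [hfg x]
  push_cast
  field_simp

lemma isDesc_iff {i : ℕ} (hi : i < p) :
    IsDesc s π r i ↔
      ((π ⟨i - 1, lt_of_le_of_lt (Nat.sub_le i 1) hi⟩ < π ⟨i, hi⟩ ∧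
        rho s r (π ⟨i, hi⟩) < rho s r (π ⟨i - 1, lt_of_le_of_lt (Nat.sub_le i 1) hi⟩)) ∨
      (π ⟨i, hi⟩ < π ⟨i - 1, lt_of_le_of_lt (Nat.sub_le i 1) hi⟩ ∧
        rho s r (π ⟨i, hi⟩) ≤ rho s r (π ⟨i - 1, lt_of_le_of_lt (Nat.sub_le i 1) hi⟩))) := by
  unfold IsDesc rho
  constructor
  · rintro ⟨h1, h2, H⟩
    exact H
  · intro H
    exact ⟨lt_of_le_of_lt (Nat.sub_le i 1) hi, hi, H⟩

/-- The key adjacent comparison: lex comparison of values equals the chain inequality. -/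
lemma adj_iff (hs : ∀ x, 0 < s x) (hr : ∀ x, r x < s x) {i : ℕ} (hi1 : 1 ≤ i) (hi : i < p)
    (g1 g2 : ℕ) :
    (toLex ((g1:ℚ) + rho s r (π ⟨i - 1, lt_of_le_of_lt (Nat.sub_le i 1) hi⟩),
        π ⟨i - 1, lt_of_le_of_lt (Nat.sub_le i 1) hi⟩) <
      toLex ((g2:ℚ) + rho s r (π ⟨i, hi⟩), π ⟨i, hi⟩)) ↔
      g1 + dsc s π r i ≤ g2 := by
  set x := π ⟨i - 1, lt_of_le_of_lt (Nat.sub_le i 1) hi⟩ with hx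
  set y := π ⟨i, hi⟩ with hy
  have hxy : x ≠ y := by
    intro h
    have := π.injective h
    have : i - 1 = i := congrArg Fin.val this
    omega
  have h0x := rho_nonneg s r x
  have h0y := rho_nonneg s r y
  have h1x := rho_lt_one s r hs hr x
  have h1y := rho_lt_one s r hs hr y
  have hdesc : IsDesc s π r i ↔ ((x < y ∧ rho s r y < rho s r x) ∨
      (y < x ∧ rho s r y ≤ rho s r x)) := isDesc_iff s π r hi
  rw [Prod.Lex.lt_iff]
  simp only [ofLex_toLex]
  rcases lt_or_gt_of_ne hxy with hlt | hgt
  · -- x < y : lex iff value ≤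
    have hlex : ((g1:ℚ) + rho s r x < (g2:ℚ) + rho s r y ∨
        ((g1:ℚ) + rho s r x = (g2:ℚ) + rho s r y ∧ x < y)) ↔
        (g1:ℚ) + rho s r x ≤ (g2:ℚ) + rho s r y := by
      constructor
      · rintro (h | ⟨h, -⟩) <;> [exact le_of_lt h; exact le_of_eq h]
      · intro h
        rcases lt_or_eq_of_le h with h | h
        · exact Or.inl h
        · exact Or.inr ⟨h, hlt⟩
    rw [hlex]
    rcases le_or_gt (rho s r x) (rho s r y) with hρ | hρ
    · have : ¬ IsDesc s π r i := by
        rw [hdesc]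
        rintro (⟨-, h⟩ | ⟨h, -⟩)
        · exact absurd hρ (not_le.mpr h)
        · exact absurd hlt (not_lt.mpr h.le)
      rw [dsc, if_neg this, add_zero, K1 h0x h1y hρ]
    · have : IsDesc s π r i := hdesc.mpr (Or.inl ⟨hlt, hρ⟩)
      rw [dsc, if_pos this, K2 h1x h0y hρ]
      omega
  · -- y < x : lex iff value <
    have hlex : ((g1:ℚ) + rho s r x < (g2:ℚ) + rho s r y ∨
        ((g1:ℚ) + rho s r x = (g2:ℚ) + rho s r y ∧ x < y)) ↔
        (g1:ℚ) + rho s r x < (g2:ℚ) + rho s r y := by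
      constructor
      · rintro (h | ⟨-, h⟩) <;> [exact h; exact absurd hgt (not_lt.mpr h.le)]
      · exact Or.inl
    rw [hlex]
    rcases le_or_gt (rho s r y) (rho s r x) with hρ | hρ
    · have : IsDesc s π r i := hdesc.mpr (Or.inr ⟨hgt, hρ⟩)
      rw [dsc, if_pos this, K4 h1x h0y hρ]
      omega
    · have : ¬ IsDesc s π r i := by
        rw [hdesc]
        rintro (⟨h, -⟩ | ⟨-, h⟩)
        · exact absurd hgt (not_lt.mpr h.le)
        · exact absurd hρ (not_lt.mpr h)
      rw [dsc, if_neg this, add_zero, K3 h0x h1y hρ]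

end LHaux

namespace LHaux

lemma finStrictMono {q : ℕ} {α : Type*} [Preorder α] {F : Fin q → α}
    (h : ∀ i : ℕ, (h1 : i + 1 < q) → F ⟨i, Nat.lt_of_succ_lt h1⟩ < F ⟨i + 1, h1⟩) :
    StrictMono F := by
  cases q with
  | zero => exact fun a => a.elim0
  | succ m =>
    rw [Fin.strictMono_iff_lt_succ]
    intro i
    exact h i.val (Nat.succ_lt_succ i.2)

variable {p : ℕ} (s : Fin p → ℕ) (π : Equiv.Perm (Fin p)) (r : Fin p → ℕ)

/-- `π` sorts `f` lexicographically by `(f x / s x, x)`. -/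
def Sorted (f : Fin p → ℕ) : Prop :=
  StrictMono fun i : Fin p => toLex (ratio s f (π i), π i)

lemma sorted_iff_chain (hs : ∀ x, 0 < s x) (hr : ∀ x, r x < s x) (f : Fin p → ℕ)
    (g : Fin p → ℕ) (hfg : ∀ i : Fin p, ratio s f (π i) = (g i : ℚ) + rho s r (π i)) :
    Sorted s π f ↔
      ∀ i : ℕ, 1 ≤ i → ∀ (h : i < p),
        g ⟨i - 1, lt_of_le_of_lt (Nat.sub_le i 1) h⟩ + dsc s π r i ≤ g ⟨i, h⟩ := by
  constructor
  · intro hsor i hi1 hi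
    have hlt : (⟨i - 1, lt_of_le_of_lt (Nat.sub_le i 1) hi⟩ : Fin p) < ⟨i, hi⟩ := by
      simp only [Fin.mk_lt_mk]; omega
    have := hsor hlt
    simp only at this
    rw [hfg, hfg] at this
    exact (adj_iff s π r hs hr hi1 hi _ _).mp this
  · intro hc
    apply finStrictMono
    intro i h1
    have := hc (i + 1) (by omega) h1
    have h2 := (adj_iff s π r hs hr (i := i + 1) (by omega) h1 _ _).mpr this
    calc (fun j : Fin p => toLex (ratio s f (π j), π j)) ⟨i, Nat.lt_of_succ_lt h1⟩
        = toLex ((g ⟨i, Nat.lt_of_succ_lt h1⟩ : ℚ) +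
            rho s r (π ⟨i, Nat.lt_of_succ_lt h1⟩), π ⟨i, Nat.lt_of_succ_lt h1⟩) := by
          simp only; rw [hfg]
      _ < toLex ((g ⟨i + 1, h1⟩ : ℚ) + rho s r (π ⟨i + 1, h1⟩), π ⟨i + 1, h1⟩) := h2
      _ = (fun j : Fin p => toLex (ratio s f (π j), π j)) ⟨i + 1, h1⟩ := by
          simp only; rw [hfg]

lemma ratio_mono_of_sorted {f : Fin p → ℕ} (hsor : Sorted s π f) {i j : Fin p} (h : i ≤ j) :
    ratio s f (π i) ≤ ratio s f (π j) := by
  rcases eq_or_lt_of_le h with rfl | h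
  · exact le_rfl
  · have := hsor h
    rw [Prod.Lex.lt_iff] at this
    rcases this with h' | ⟨h', -⟩
    · exact le_of_lt h'
    · exact le_of_eq h'

lemma label_lt_of_sorted {f : Fin p → ℕ} (hsor : Sorted s π f) {i j : Fin p} (h : i < j)
    (hq : ratio s f (π i) = ratio s f (π j)) : π i < π j := by
  have := hsor h
  rw [Prod.Lex.lt_iff] at this
  rcases this with h' | ⟨-, h'⟩
  · exact absurd hq (ne_of_lt h')
  · exact h'

lemma perm_eq_of_strictMono {α : Type*} [LinearOrder α] {q : ℕ} (π₁ π₂ : Equiv.Perm (Fin q))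
    (E : Fin q → α) (h1 : StrictMono (E ∘ π₁)) (h2 : StrictMono (E ∘ π₂)) : π₁ = π₂ := by
  set σ : Equiv.Perm (Fin q) := π₁.trans π₂.symm with hσdef
  have hσap : ∀ x, π₂ (σ x) = π₁ x := fun x => π₂.apply_symm_apply _
  have hσ : StrictMono (σ : Fin q → Fin q) := by
    intro a b hab
    have h11 := h1 hab
    have h12 : E (π₂ (σ a)) < E (π₂ (σ b)) := by rw [hσap, hσap]; exact h11
    exact (h2.lt_iff_lt).mp h12
  have hσinv : StrictMono (σ.symm : Fin q → Fin q) := by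
    intro a b hab
    by_contra hcon
    push_neg at hcon
    have := hσ.monotone hcon
    rw [Equiv.apply_symm_apply, Equiv.apply_symm_apply] at this
    exact absurd hab (not_lt.mpr this)
  haveI : WellFoundedLT (Fin q) := Finite.to_wellFoundedLT
  have hid : ∀ x, σ x = x := by
    intro x
    have h1' : x ≤ σ x := hσ.le_apply
    have h2' : σ x ≤ x := by
      have h3 := hσinv.le_apply (x := σ x)
      rwa [Equiv.symm_apply_apply] at h3
    exact le_antisymm h2' h1'
  exact Equiv.ext fun x => by rw [← hσap x, hid x]

/-- the sorting permutation of `f`. -/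
def sortPerm (f : Fin p → ℕ) : Equiv.Perm (Fin p) :=
  Tuple.sort (fun x => toLex (ratio s f x, x))

lemma sorted_sortPerm (f : Fin p → ℕ) : Sorted s (sortPerm s f) f := by
  have hinj : Function.Injective (fun x : Fin p => toLex (ratio s f x, x)) := by
    intro a b h
    have := congrArg (fun z : Lex (ℚ × Fin p) => (ofLex z).2) h
    exact this
  exact (Tuple.monotone_sort _).strictMono_of_injective
    (hinj.comp (Equiv.injective _))

lemma sortPerm_unique {f : Fin p → ℕ} (hsor : Sorted s π f) : π = sortPerm s f :=
  perm_eq_of_strictMono π (sortPerm s f) (fun x => toLex (ratio s f x, x)) hsor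
    (sorted_sortPerm s f)

end LHaux

namespace LHaux

variable {p : ℕ} (s : Fin p → ℕ) (π : Equiv.Perm (Fin p)) (r : Fin p → ℕ)

lemma linext_of_sorted (P : PartialOrder (Fin p)) {f : Fin p → ℕ} (hf : IsLHPart P s f)
    (hsor : Sorted s π f) : π ∈ LinExt P := by
  intro i j hle
  by_contra hij
  rw [Fin.le_def] at hij
  have hji : j < i := Fin.lt_def.mpr (by omega)
  have hne : π i ≠ π j := fun h => (Fin.ne_of_lt hji) (π.injective h).symm
  have hplt : P.lt (π i) (π j) := by
    rw [P.lt_iff_le_not_ge]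
    refine ⟨hle, fun hba => hne (P.le_antisymm _ _ hle hba)⟩
  have h1 : ratio s f (π i) ≤ ratio s f (π j) := hf.1 _ _ hplt
  have h2 : ratio s f (π j) ≤ ratio s f (π i) := ratio_mono_of_sorted s π hsor (Fin.le_def.mpr (Nat.le_of_lt (Fin.lt_def.mp hji)))
  have heq : ratio s f (π j) = ratio s f (π i) := le_antisymm h2 h1
  have h3 : π j < π i := label_lt_of_sorted s π hsor hji heq
  have h4 : ratio s f (π i) < ratio s f (π j) := hf.2 _ _ hplt h3
  exact absurd h4 (not_lt.mpr h2)

lemma isLHPart_of (P : PartialOrder (Fin p)) (hπ : π ∈ LinExt P) {f : Fin p → ℕ}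
    (hsor : Sorted s π f) : IsLHPart P s f := by
  have key : ∀ x y, P.lt x y → π.symm x ≤ π.symm y ∧ π.symm x ≠ π.symm y := by
    intro x y hlt
    have hle : P.le x y := ((P.lt_iff_le_not_ge x y).mp hlt).1
    have hne : x ≠ y := by
      intro h
      subst h
      exact ((P.lt_iff_le_not_ge x x).mp hlt).2 (P.le_refl x)
    refine ⟨hπ _ _ (by rw [Equiv.apply_symm_apply, Equiv.apply_symm_apply]; exact hle), ?_⟩
    exact fun h => hne (by rw [← Equiv.apply_symm_apply π x, h, Equiv.apply_symm_apply])
  constructor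
  · intro x y hlt
    have h := ratio_mono_of_sorted s π hsor (key x y hlt).1
    rwa [Equiv.apply_symm_apply, Equiv.apply_symm_apply] at h
  · intro x y hlt hyx
    have hij : π.symm x < π.symm y := by
      have hv := Fin.le_def.mp (key x y hlt).1
      have hnv : (π.symm x).val ≠ (π.symm y).val := fun h => (key x y hlt).2 (Fin.ext h)
      exact Fin.lt_def.mpr (Nat.lt_of_le_of_ne hv hnv)
    have h := ratio_mono_of_sorted s π hsor (Fin.le_def.mpr (Nat.le_of_lt (Fin.lt_def.mp hij)))
    rw [Equiv.apply_symm_apply, Equiv.apply_symm_apply] at h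
    rcases lt_or_eq_of_le h with h' | h'
    · exact h'
    · have := label_lt_of_sorted s π hsor hij (by
        rw [Equiv.apply_symm_apply, Equiv.apply_symm_apply]; exact h')
      rw [Equiv.apply_symm_apply, Equiv.apply_symm_apply] at this
      have h1 := Fin.lt_def.mp hyx
      have h2 := Fin.lt_def.mp this
      exact absurd h2 (Nat.lt_asymm h1)

/-- indicator: is the residue at the top position nonzero. -/
def ebit (hp : 0 < p) : ℕ := if r (π ⟨p - 1, Nat.sub_lt hp Nat.one_pos⟩) = 0 then 0 else 1

/-- the chain set attached to `(π, r)`. -/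
def Gset (hp : 0 < p) (n : ℕ) : Finset (Fin p → ℕ) :=
  (Fintype.piFinset fun _ : Fin p => Finset.range (n + 1)).filter fun g =>
    (∀ i : ℕ, 1 ≤ i → ∀ (h : i < p),
      g ⟨i - 1, lt_of_le_of_lt (Nat.sub_le i 1) h⟩ + dsc s π r i ≤ g ⟨i, h⟩) ∧
    g ⟨p - 1, Nat.sub_lt hp Nat.one_pos⟩ + ebit π r hp ≤ n

lemma mem_Gset {hp : 0 < p} {n : ℕ} {g : Fin p → ℕ} :
    g ∈ Gset s π r hp n ↔ (∀ i : Fin p, g i ≤ n) ∧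
      (∀ i : ℕ, 1 ≤ i → ∀ (h : i < p),
        g ⟨i - 1, lt_of_le_of_lt (Nat.sub_le i 1) h⟩ + dsc s π r i ≤ g ⟨i, h⟩) ∧
      g ⟨p - 1, Nat.sub_lt hp Nat.one_pos⟩ + ebit π r hp ≤ n := by
  simp [Gset, Fintype.mem_piFinset, Nat.lt_succ_iff, and_assoc]

/-- the finite set `ℕ_{≤ n}(P,s)`. -/
def Nset (P : PartialOrder (Fin p)) (n : ℕ) : Finset (Fin p → ℕ) :=
  (Fintype.piFinset fun x : Fin p => Finset.range (n * s x + 1)).filter fun f =>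
    IsLHPart P s f ∧ ∀ x, ratio s f x ≤ (n : ℚ)

lemma mem_Nset {P : PartialOrder (Fin p)} (hs : ∀ x, 0 < s x) {n : ℕ} {f : Fin p → ℕ} :
    f ∈ Nset s P n ↔ IsLHPart P s f ∧ ∀ x, ratio s f x ≤ (n : ℚ) := by
  rw [Nset, Finset.mem_filter, and_iff_right_iff_imp]
  intro hf
  rw [Fintype.mem_piFinset]
  intro x
  rw [Finset.mem_range, Nat.lt_succ_iff]
  have h := hf.2 x
  rw [ratio, div_le_iff₀ (by exact_mod_cast hs x)] at h
  exact_mod_cast h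

lemma ratio_Phi (hs : ∀ x, 0 < s x) (g : Fin p → ℕ) (i : Fin p) :
    ratio s (Phi s π r g) (π i) = (g i : ℚ) + rho s r (π i) := by
  have := ratio_decomp s π r hs (Phi s π r g) g (fun x => rfl) (π i)
  rwa [Equiv.symm_apply_apply] at this

lemma top_ratio_le (hp : 0 < p) (hs : ∀ x, 0 < s x) (hr : ∀ x, r x < s x) {n : ℕ}
    {f g : Fin p → ℕ} (hfg : ∀ i : Fin p, ratio s f (π i) = (g i : ℚ) + rho s r (π i))
    (hbd : g ⟨p - 1, Nat.sub_lt hp Nat.one_pos⟩ + ebit π r hp ≤ n)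
    (hsor : Sorted s π f) : ∀ x, ratio s f x ≤ (n : ℚ) := by
  intro x
  have hx : ratio s f x = ratio s f (π (π.symm x)) := by rw [Equiv.apply_symm_apply]
  have hle : π.symm x ≤ (⟨p - 1, Nat.sub_lt hp Nat.one_pos⟩ : Fin p) :=
    Fin.le_def.mpr (by have := (π.symm x).2; simp only; omega)
  have h1 : ratio s f x ≤ ratio s f (π ⟨p - 1, Nat.sub_lt hp Nat.one_pos⟩) := by
    rw [hx]; exact ratio_mono_of_sorted s π hsor hle
  refine le_trans h1 ?_
  rw [hfg]
  set i0 : Fin p := ⟨p - 1, Nat.sub_lt hp Nat.one_pos⟩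
  by_cases h0 : r (π i0) = 0
  · have he : ebit π r hp = 0 := if_pos h0
    have : rho s r (π i0) = 0 := (rho_eq_zero_iff s r hs _).mpr h0
    rw [this, add_zero]
    rw [he, add_zero] at hbd
    exact_mod_cast hbd
  · have he : ebit π r hp = 1 := if_neg h0
    rw [he] at hbd
    have h2 : rho s r (π i0) < 1 := rho_lt_one s r hs hr _
    have h3 : (g i0 : ℚ) + 1 ≤ n := by exact_mod_cast hbd
    linarith

lemma top_bound_of (hp : 0 < p) (hs : ∀ x, 0 < s x) {n : ℕ} {f g : Fin p → ℕ}
    (hfg : ∀ i : Fin p, ratio s f (π i) = (g i : ℚ) + rho s r (π i))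
    (hrat : ratio s f (π ⟨p - 1, Nat.sub_lt hp Nat.one_pos⟩) ≤ (n : ℚ)) :
    g ⟨p - 1, Nat.sub_lt hp Nat.one_pos⟩ + ebit π r hp ≤ n := by
  set i0 : Fin p := ⟨p - 1, Nat.sub_lt hp Nat.one_pos⟩
  rw [hfg] at hrat
  by_cases h0 : r (π i0) = 0
  · have he : ebit π r hp = 0 := if_pos h0
    rw [he, add_zero]
    have : rho s r (π i0) = 0 := (rho_eq_zero_iff s r hs _).mpr h0
    rw [this, add_zero] at hrat
    exact_mod_cast hrat
  · have he : ebit π r hp = 1 := if_neg h0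
    rw [he]
    have hρ : 0 < rho s r (π i0) := by
      rw [rho]
      apply div_pos
      · exact_mod_cast Nat.pos_of_ne_zero h0
      · exact_mod_cast hs (π i0)
    have : (g i0 : ℚ) < n := by linarith
    have : g i0 < n := by exact_mod_cast this
    omega

lemma Phi_mem_Nset (P : PartialOrder (Fin p)) (hp : 0 < p) (hs : ∀ x, 0 < s x)
    (hr : ∀ x, r x < s x) (hπ : π ∈ LinExt P) {n : ℕ} {g : Fin p → ℕ}
    (hg : g ∈ Gset s π r hp n) : Phi s π r g ∈ Nset s P n := by
  rw [mem_Gset] at hg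
  obtain ⟨hbd, hchain, htop⟩ := hg
  have hsor : Sorted s π (Phi s π r g) :=
    (sorted_iff_chain s π r hs hr _ g (ratio_Phi s π r hs g)).mpr hchain
  rw [mem_Nset s hs]
  exact ⟨isLHPart_of s π P hπ hsor,
    top_ratio_le s π r hp hs hr (ratio_Phi s π r hs g) htop hsor⟩

lemma gOf_mem_Gset (P : PartialOrder (Fin p)) (hp : 0 < p) (hs : ∀ x, 0 < s x)
    {n : ℕ} {f : Fin p → ℕ} (hN : f ∈ Nset s P n) (hsor : Sorted s π f)
    (hmod : ∀ x, f x % s x = r x) :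
    (fun i : Fin p => f (π i) / s (π i)) ∈ Gset s π r hp n := by
  have hr : ∀ x, r x < s x := fun x => by rw [← hmod x]; exact Nat.mod_lt _ (hs x)
  rw [mem_Nset s hs] at hN
  have hfg : ∀ i : Fin p, ratio s f (π i) = ((f (π i) / s (π i) : ℕ) : ℚ) + rho s r (π i) := by
    intro i
    have hdm : ∀ x, f x = s x * ((fun j : Fin p => f (π j) / s (π j)) (π.symm x)) + r x := by
      intro x
      simp only [Equiv.apply_symm_apply]
      rw [← hmod x]
      exact (Nat.div_add_mod (f x) (s x)).symm
    have := ratio_decomp s π r hs f (fun j : Fin p => f (π j) / s (π j)) hdm (π i)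
    simpa [Equiv.symm_apply_apply] using this
  rw [mem_Gset]
  refine ⟨?_, (sorted_iff_chain s π r hs hr f _ hfg).mp hsor, ?_⟩
  · intro i
    have h1 := hN.2 (π i)
    rw [hfg i] at h1
    have h2 := rho_nonneg s r (π i)
    have : ((f (π i) / s (π i) : ℕ) : ℚ) ≤ n := by linarith
    exact_mod_cast this
  · exact top_bound_of s π r hp hs hfg (hN.2 _)

lemma card_Nset (P : PartialOrder (Fin p)) (hp : 0 < p) (hs : ∀ x, 0 < s x) (n : ℕ) :
    (Nset s P n).card =
      ∑ τ ∈ LPs P s, (Gset s τ.1 (fun x => (τ.2 x : ℕ)) hp n).card := by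
  have H : ∀ f ∈ Nset s P n,
      (sortPerm s f, fun x => (⟨f x % s x, Nat.mod_lt _ (hs x)⟩ : Fin (s x))) ∈ LPs P s := by
    intro f hf
    rw [mem_Nset s hs] at hf
    rw [LPs, Finset.mem_filter]
    exact ⟨Finset.mem_univ _, linext_of_sorted s (sortPerm s f) P hf.1 (sorted_sortPerm s f)⟩
  rw [Finset.card_eq_sum_card_fiberwise H]
  refine Finset.sum_congr rfl fun τ hτ => ?_
  set π := τ.1 with hπdef
  set r : Fin p → ℕ := fun x => (τ.2 x : ℕ) with hrdef
  have hr : ∀ x, r x < s x := fun x => (τ.2 x).2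
  have hπ : π ∈ LinExt P := (Finset.mem_filter.mp hτ).2
  refine Finset.card_bij' (fun f _ => fun i : Fin p => f (π i) / s (π i))
    (fun g _ => Phi s π r g) ?_ ?_ ?_ ?_
  · -- forward membership
    intro f hf
    rw [Finset.mem_filter] at hf
    obtain ⟨hN, hT⟩ := hf
    have hfst : sortPerm s f = π := congrArg Prod.fst hT
    have hsor : Sorted s π f := hfst ▸ sorted_sortPerm s f
    have hmod : ∀ x, f x % s x = r x := by
      intro x
      have := congrArg (fun z => (z.2 x : ℕ)) hT
      exact this
    exact gOf_mem_Gset s π r P hp hs hN hsor hmod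
  · -- backward membership
    intro g hg
    rw [Finset.mem_filter]
    have hchain := (mem_Gset s π r).mp hg
    have hsor : Sorted s π (Phi s π r g) :=
      (sorted_iff_chain s π r hs hr _ g (ratio_Phi s π r hs g)).mpr hchain.2.1
    refine ⟨Phi_mem_Nset s π r P hp hs hr hπ hg, ?_⟩
    have hfst : sortPerm s (Phi s π r g) = π := (sortPerm_unique s π hsor).symm
    refine Prod.ext hfst ?_
    funext x
    apply Fin.ext
    show Phi s π r g x % s x = (τ.2 x : ℕ)
    rw [Phi, Nat.mul_add_mod, Nat.mod_eq_of_lt (hr x)]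
  · -- left inverse
    intro f hf
    rw [Finset.mem_filter] at hf
    have hmod : ∀ x, f x % s x = r x := by
      intro x
      have := congrArg (fun z => (z.2 x : ℕ)) hf.2
      exact this
    funext x
    show s x * (f (π (π.symm x)) / s (π (π.symm x))) + r x = f x
    rw [Equiv.apply_symm_apply, ← hmod x]
    exact Nat.div_add_mod (f x) (s x)
  · -- right inverse
    intro g hg
    funext i
    show Phi s π r g (π i) / s (π i) = g i
    rw [Phi]
    simp only [Equiv.symm_apply_apply]
    rw [Nat.mul_add_div (hs (π i)), Nat.div_eq_of_lt (hr (π i)), add_zero]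

end LHaux

namespace LHaux

variable {p : ℕ} (s : Fin p → ℕ) (π : Equiv.Perm (Fin p)) (r : Fin p → ℕ)

/-- number of descents in positions `1..i`. -/
def cfun (i : ℕ) : ℕ := ((Finset.Icc 1 i).filter (IsDesc s π r)).card

lemma cfun_zero : cfun s π r 0 = 0 := by
  rw [cfun]
  simp

lemma cfun_succ (i : ℕ) : cfun s π r (i + 1) = cfun s π r i + dsc s π r (i + 1) := by
  have hins : Finset.Icc 1 (i + 1) = insert (i + 1) (Finset.Icc 1 i) := by
    ext a
    simp only [Finset.mem_Icc, Finset.mem_insert]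
    omega
  rw [cfun, hins, Finset.filter_insert]
  by_cases h : IsDesc s π r (i + 1)
  · rw [if_pos h, Finset.card_insert_of_notMem (by
      intro hmem
      have := Finset.mem_of_mem_filter _ hmem
      rw [Finset.mem_Icc] at this
      omega), dsc, if_pos h, cfun]
  · rw [if_neg h, dsc, if_neg h, add_zero, cfun]

lemma cfun_mono {i j : ℕ} (h : i ≤ j) : cfun s π r i ≤ cfun s π r j := by
  apply Finset.card_le_card
  apply Finset.filter_subset_filter
  intro a ha
  rw [Finset.mem_Icc] at *
  omega

/-- lower bound along a chain. -/
lemma chainLB {n : ℕ} {g : Fin p → ℕ}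
    (hc : ∀ i : ℕ, 1 ≤ i → ∀ (h : i < p),
      g ⟨i - 1, lt_of_le_of_lt (Nat.sub_le i 1) h⟩ + dsc s π r i ≤ g ⟨i, h⟩) :
    ∀ i : ℕ, ∀ (h : i < p), cfun s π r i ≤ g ⟨i, h⟩ := by
  intro i
  induction i with
  | zero => intro h; rw [cfun_zero]; omega
  | succ k ih =>
    intro h
    have h1 := ih (Nat.lt_of_succ_lt h)
    have h2 := hc (k + 1) (by omega) h
    rw [cfun_succ]
    simp only [Nat.add_sub_cancel] at h2
    omega

lemma chain2 {n : ℕ} {g : Fin p → ℕ}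
    (hc : ∀ i : ℕ, 1 ≤ i → ∀ (h : i < p),
      g ⟨i - 1, lt_of_le_of_lt (Nat.sub_le i 1) h⟩ + dsc s π r i ≤ g ⟨i, h⟩) :
    ∀ j : ℕ, ∀ (hj : j < p), ∀ i : ℕ, (hij : i ≤ j) →
      g ⟨i, lt_of_le_of_lt hij hj⟩ + cfun s π r j ≤ g ⟨j, hj⟩ + cfun s π r i := by
  intro j
  induction j with
  | zero =>
    intro hj i hij
    have : i = 0 := by omega
    subst this
    omega
  | succ k ih =>
    intro hj i hij
    rcases Nat.lt_succ_iff_lt_or_eq.mp (Nat.lt_succ_of_le hij) with h | h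
    · have h1 := ih (Nat.lt_of_succ_lt hj) i (by omega)
      have h2 := hc (k + 1) (by omega) hj
      simp only [Nat.add_sub_cancel] at h2
      rw [cfun_succ]
      omega
    · subst h
      omega

/-- the set of weakly increasing sequences bounded by `m`. -/
def Mset (q m : ℕ) : Finset (Fin q → ℕ) :=
  (Fintype.piFinset fun _ : Fin q => Finset.range (m + 1)).filter fun h =>
    ∀ i j : Fin q, i ≤ j → h i ≤ h j

lemma mem_Mset {q m : ℕ} {h : Fin q → ℕ} :
    h ∈ Mset q m ↔ (∀ i, h i ≤ m) ∧ ∀ i j : Fin q, i ≤ j → h i ≤ h j := by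
  simp [Mset, Fintype.mem_piFinset, Nat.lt_succ_iff]

lemma card_Gset (hp : 0 < p) (n : ℕ) :
    (Gset s π r hp n).card =
      if cfun s π r (p - 1) + ebit π r hp ≤ n then
        (Mset p (n - (cfun s π r (p - 1) + ebit π r hp))).card
      else 0 := by
  set d := cfun s π r (p - 1) + ebit π r hp with hd
  split_ifs with hdn
  · -- bijection g ↦ g - cfun
    refine Finset.card_bij' (fun g _ => fun i : Fin p => g i - cfun s π r i.val)
      (fun h _ => fun i : Fin p => h i + cfun s π r i.val) ?_ ?_ ?_ ?_
    · intro g hg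
      rw [mem_Gset] at hg
      obtain ⟨hbd, hc, htop⟩ := hg
      have hLB := chainLB s π r (n := n) hc
      have h2 := chain2 s π r (n := n) hc
      rw [mem_Mset]
      constructor
      · intro i
        show g i - cfun s π r i.val ≤ n - d
        have h3 := h2 (p - 1) (Nat.sub_lt hp Nat.one_pos) i.val (by omega)
        have hLBi := hLB i.val i.2
        simp only [Fin.eta] at h3 hLBi
        omega
      · intro i j hij
        show g i - cfun s π r i.val ≤ g j - cfun s π r j.val
        have h3 := h2 j.val j.2 i.val (Fin.le_def.mp hij)
        have hLBi := hLB i.val i.2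
        have hcm := cfun_mono s π r (Fin.le_def.mp hij)
        simp only [Fin.eta] at h3 hLBi
        omega
    · intro h hh
      rw [mem_Mset] at hh
      obtain ⟨hbd, hmono⟩ := hh
      rw [mem_Gset]
      have hcm : ∀ i : ℕ, i < p → cfun s π r i ≤ cfun s π r (p - 1) :=
        fun i hi => cfun_mono s π r (by omega)
      refine ⟨?_, ?_, ?_⟩
      · intro i
        show h i + cfun s π r i.val ≤ n
        have hb := hbd i
        have hcc := hcm i.val i.2
        omega
      · intro i hi1 hi
        show h ⟨i - 1, lt_of_le_of_lt (Nat.sub_le i 1) hi⟩ + cfun s π r (i - 1) +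
            dsc s π r i ≤ h ⟨i, hi⟩ + cfun s π r i
        have hstep := cfun_succ s π r (i - 1)
        have heq : i - 1 + 1 = i := by omega
        rw [heq] at hstep
        have hm : h ⟨i - 1, lt_of_le_of_lt (Nat.sub_le i 1) hi⟩ ≤ h ⟨i, hi⟩ :=
          hmono _ _ (Fin.le_def.mpr (by show i - 1 ≤ i; omega))
        omega
      · show h ⟨p - 1, Nat.sub_lt hp Nat.one_pos⟩ + cfun s π r (p - 1) + ebit π r hp ≤ n
        have hb := hbd ⟨p - 1, Nat.sub_lt hp Nat.one_pos⟩
        omega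
    · intro g hg
      rw [mem_Gset] at hg
      have hLB := chainLB s π r (n := n) hg.2.1
      funext i
      show g i - cfun s π r i.val + cfun s π r i.val = g i
      have hLBi := hLB i.val i.2
      simp only [Fin.eta] at hLBi
      omega
    · intro h hh
      funext i
      show h i + cfun s π r i.val - cfun s π r i.val = h i
      omega
  · -- empty
    rw [Finset.card_eq_zero]
    rw [Finset.eq_empty_iff_forall_notMem]
    intro g hg
    rw [mem_Gset] at hg
    have hLB := chainLB s π r (n := n) hg.2.1 (p - 1) (Nat.sub_lt hp Nat.one_pos)
    have := hg.2.2
    omega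

end LHaux

namespace LHaux

lemma Mcard_zero (m : ℕ) : (Mset 0 m).card = 1 := by
  apply Finset.card_eq_one.mpr
  refine ⟨fun i => i.elim0, ?_⟩
  ext f
  simp only [Finset.mem_singleton, mem_Mset]
  constructor
  · intro _
    funext i
    exact i.elim0
  · rintro rfl
    exact ⟨fun i => i.elim0, fun i => i.elim0⟩

lemma Mcard_succ (q m : ℕ) :
    (Mset (q + 1) m).card = ∑ k ∈ Finset.range (m + 1), (Mset q k).card := by
  have H : ∀ h ∈ Mset (q + 1) m, h (Fin.last q) ∈ Finset.range (m + 1) := by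
    intro h hh
    rw [mem_Mset] at hh
    rw [Finset.mem_range, Nat.lt_succ_iff]
    exact hh.1 _
  rw [Finset.card_eq_sum_card_fiberwise H]
  refine Finset.sum_congr rfl fun k hk => ?_
  rw [Finset.mem_range, Nat.lt_succ_iff] at hk
  refine Finset.card_bij' (fun h _ => Fin.init h) (fun g _ => Fin.snoc g k) ?_ ?_ ?_ ?_
  · intro h hh
    rw [Finset.mem_filter, mem_Mset] at hh
    obtain ⟨⟨hbd, hmono⟩, hlast⟩ := hh
    rw [mem_Mset]
    constructor
    · intro i
      have := hmono i.castSucc (Fin.last q) (Fin.le_last _)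
      rw [hlast] at this
      exact this
    · intro i j hij
      exact hmono _ _ (Fin.castSucc_le_castSucc_iff.mpr hij)
  · intro g hg
    rw [mem_Mset] at hg
    obtain ⟨hbd, hmono⟩ := hg
    rw [Finset.mem_filter, mem_Mset]
    beta_reduce
    refine ⟨⟨?_, ?_⟩, Fin.snoc_last _ _⟩
    · intro a
      induction a using Fin.lastCases with
      | last => rw [Fin.snoc_last]; exact hk
      | cast i => rw [Fin.snoc_castSucc]; exact le_trans (hbd i) hk
    · intro i j hij
      induction j using Fin.lastCases with
      | last =>
        rw [Fin.snoc_last]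
        induction i using Fin.lastCases with
        | last => rw [Fin.snoc_last]
        | cast i' => rw [Fin.snoc_castSucc]; exact hbd i'
      | cast j' =>
        induction i using Fin.lastCases with
        | last =>
          exact absurd (lt_of_lt_of_le (Fin.castSucc_lt_last j') hij)
            (lt_irrefl _)
        | cast i' =>
          rw [Fin.snoc_castSucc, Fin.snoc_castSucc]
          exact hmono _ _ (Fin.castSucc_le_castSucc_iff.mp hij)
  · intro h hh
    rw [Finset.mem_filter] at hh
    beta_reduce
    rw [← hh.2]
    exact Fin.snoc_init_self h
  · intro g hg
    beta_reduce
    simp [Fin.init_snoc]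

lemma coeff_one_sub_X_mul (φ : PowerSeries ℤ) (n : ℕ) :
    (PowerSeries.coeff n) ((1 - PowerSeries.X) * φ) =
      (PowerSeries.coeff n) φ -
        if n = 0 then 0 else (PowerSeries.coeff (n - 1)) φ := by
  rw [sub_mul, one_mul, map_sub]
  congr 1
  cases n with
  | zero =>
    simp [PowerSeries.coeff_zero_eq_constantCoeff, map_mul]
  | succ k =>
    rw [PowerSeries.coeff_succ_X_mul]
    simp

lemma geom_inv (q : ℕ) :
    (1 - PowerSeries.X : PowerSeries ℤ) ^ (q + 1) *
      PowerSeries.mk (fun n => ((Mset q n).card : ℤ)) = 1 := by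
  induction q with
  | zero =>
    rw [pow_one]
    apply PowerSeries.ext
    intro n
    rw [coeff_one_sub_X_mul]
    simp only [PowerSeries.coeff_mk, Mcard_zero, PowerSeries.coeff_one]
    cases n with
    | zero => simp
    | succ k => simp [Mcard_zero]
  | succ q ih =>
    have key : (1 - PowerSeries.X : PowerSeries ℤ) *
        PowerSeries.mk (fun n => ((Mset (q + 1) n).card : ℤ)) =
        PowerSeries.mk (fun n => ((Mset q n).card : ℤ)) := by
      apply PowerSeries.ext
      intro n
      rw [coeff_one_sub_X_mul]
      simp only [PowerSeries.coeff_mk]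
      cases n with
      | zero =>
        simp only [if_pos rfl, sub_zero]
        rw [Mcard_succ]
        simp
      | succ k =>
        simp only [Nat.succ_ne_zero, if_neg, Nat.add_sub_cancel]
        rw [Mcard_succ q (k + 1), Mcard_succ q k, Finset.sum_range_succ]
        push_cast
        ring
    calc (1 - PowerSeries.X : PowerSeries ℤ) ^ (q + 2) *
          PowerSeries.mk (fun n => ((Mset (q + 1) n).card : ℤ))
        = (1 - PowerSeries.X : PowerSeries ℤ) ^ (q + 1) *
            ((1 - PowerSeries.X) *
              PowerSeries.mk (fun n => ((Mset (q + 1) n).card : ℤ))) := by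
          rw [← mul_assoc, ← pow_succ]
      _ = 1 := by rw [key, ih]

variable {p : ℕ} (s : Fin p → ℕ) (π : Equiv.Perm (Fin p)) (r : Fin p → ℕ)

lemma Gser (hp : 0 < p) :
    PowerSeries.mk (fun n => ((Gset s π r hp n).card : ℤ)) =
      (PowerSeries.X : PowerSeries ℤ) ^ (cfun s π r (p - 1) + ebit π r hp) *
        PowerSeries.mk (fun n => ((Mset p n).card : ℤ)) := by
  set d := cfun s π r (p - 1) + ebit π r hp with hd
  apply PowerSeries.ext
  intro n
  rcases le_or_gt d n with h | h
  · obtain ⟨k, rfl⟩ := Nat.exists_eq_add_of_le h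
    rw [PowerSeries.coeff_mk, card_Gset, if_pos (by omega)]
    have : d + k - d = k := by omega
    rw [this, add_comm d k, PowerSeries.coeff_X_pow_mul, PowerSeries.coeff_mk]
  · rw [PowerSeries.coeff_mk, card_Gset, if_neg (by omega)]
    have hdvd : (PowerSeries.X : PowerSeries ℤ) ^ d ∣
        (PowerSeries.X : PowerSeries ℤ) ^ d *
          PowerSeries.mk (fun n => ((Mset p n).card : ℤ)) := dvd_mul_right _ _
    rw [PowerSeries.X_pow_dvd_iff.mp hdvd n h]
    simp

lemma Dfull_card (hp : 0 < p) :
    (Dfull hp s π r).card = cfun s π r (p - 1) + ebit π r hp := by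
  by_cases h : r (π ⟨p - 1, Nat.sub_lt hp Nat.one_pos⟩) = 0
  · rw [Dfull, if_pos h, ebit, if_pos h, add_zero, D1, cfun]
  · rw [Dfull, if_neg h, ebit, if_neg h, Finset.card_insert_of_notMem, D1, cfun]
    intro hmem
    have := Finset.mem_of_mem_filter _ hmem
    rw [Finset.mem_Icc] at this
    omega

end LHaux

/-- `(1-t)^{p+1} ∑_{n ≥ 0} |ℕ_{≤n}(P,s)| t^n = ∑_{τ ∈ L(P,s)} t^{des_s(τ)}`;
equivalently, the `(P,s)`-Eulerian polynomial `A_{(P,s)}(t)` is the generating polynomial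
of the statistic `des_s(τ) = |D(τ)|` over `L(P,s)`. -/
theorem Eulerian_eq_descent_polynomial {p : ℕ} (hp : 0 < p)
    (P : PartialOrder (Fin p)) (s : Fin p → ℕ) (hs : ∀ x, 0 < s x) :
    (1 - PowerSeries.X : PowerSeries ℤ) ^ (p + 1) *
        PowerSeries.mk (fun n =>
          (Set.ncard {f : Fin p → ℕ | IsLHPart P s f ∧
            ∀ x, (f x : ℚ) / (s x : ℚ) ≤ (n : ℚ)} : ℤ)) =
      ∑ τ ∈ LPs P s,
        (PowerSeries.X : PowerSeries ℤ) ^ (Dfull hp s τ.1 fun x => (τ.2 x : ℕ)).card := by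
  have hset : ∀ n : ℕ, {f : Fin p → ℕ | IsLHPart P s f ∧
      ∀ x, (f x : ℚ) / (s x : ℚ) ≤ (n : ℚ)} = ↑(LHaux.Nset s P n) := by
    intro n
    ext f
    rw [Set.mem_setOf_eq, Finset.mem_coe, LHaux.mem_Nset s hs]
    rfl
  have hfun : (fun n : ℕ => (Set.ncard {f : Fin p → ℕ | IsLHPart P s f ∧
      ∀ x, (f x : ℚ) / (s x : ℚ) ≤ (n : ℚ)} : ℤ)) =
      (fun n : ℕ => ((LHaux.Nset s P n).card : ℤ)) := by
    funext n
    rw [hset n, Set.ncard_coe_finset]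
  rw [hfun]
  have hsum : PowerSeries.mk (fun n : ℕ => ((LHaux.Nset s P n).card : ℤ)) =
      ∑ τ ∈ LPs P s, PowerSeries.mk (fun n : ℕ =>
        ((LHaux.Gset s τ.1 (fun x => (τ.2 x : ℕ)) hp n).card : ℤ)) := by
    apply PowerSeries.ext
    intro n
    rw [PowerSeries.coeff_mk, map_sum]
    simp only [PowerSeries.coeff_mk]
    rw [LHaux.card_Nset s P hp hs n]
    push_cast
    rfl
  rw [hsum, Finset.mul_sum]
  refine Finset.sum_congr rfl fun τ hτ => ?_
  rw [LHaux.Gser, LHaux.Dfull_card, mul_left_comm, LHaux.geom_inv, mul_one]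
end
end

section
/- Let P be a labeled poset on [p] and s : [p] → ℤ₊. Then ∑_{τ ∈ L(P,s)} t^{|D₄(τ)|} = ∑_{τ ∈ L(P,s)} t^{|D₃(τ)|+1} as polynomials in t. Moreover, if s(x) = 1 for every minimal element x of P, then ∑_{τ ∈ L(P,s)} t^{|D(τ)|} = ∑_{τ ∈ L(P,s)} t^{|D₃(τ)|}. -/
open scoped Classical

noncomputable section

section Aux

variable {p : ℕ}

lemma isDesc_iff {s : Fin p → ℕ} {π : Equiv.Perm (Fin p)} {r : Fin p → ℕ} {i : ℕ}
    (h1 : i - 1 < p) (h2 : i < p) :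
    IsDesc s π r i ↔
      ((π ⟨i - 1, h1⟩ < π ⟨i, h2⟩ ∧
        (r (π ⟨i - 1, h1⟩) : ℚ) / (s (π ⟨i - 1, h1⟩) : ℚ) >
          (r (π ⟨i, h2⟩) : ℚ) / (s (π ⟨i, h2⟩) : ℚ)) ∨
      (π ⟨i, h2⟩ < π ⟨i - 1, h1⟩ ∧
        (r (π ⟨i - 1, h1⟩) : ℚ) / (s (π ⟨i - 1, h1⟩) : ℚ) ≥
          (r (π ⟨i, h2⟩) : ℚ) / (s (π ⟨i, h2⟩) : ℚ))) := by
  constructor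
  · rintro ⟨h1', h2', h⟩; exact h
  · intro h; exact ⟨h1, h2, h⟩

lemma mod_succ_zero_iff {n m : ℕ} (h : n < m) : (n + 1) % m = 0 ↔ n + 1 = m := by
  by_cases hw : n + 1 = m
  · simp [hw]
  · rw [Nat.mod_eq_of_lt (by omega)]; omega

lemma ratio_key {α : Type*} [LinearOrder α] {a b : α} (hab : a ≠ b)
    {na ma nb mb : ℕ} (ha : na < ma) (hb : nb < mb) :
    (if (a < b ∧
          ((((na + 1) % ma : ℕ) : ℚ) / (ma : ℚ) > (((nb + 1) % mb : ℕ) : ℚ) / (mb : ℚ))) ∨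
        (b < a ∧
          ((((na + 1) % ma : ℕ) : ℚ) / (ma : ℚ) ≥ (((nb + 1) % mb : ℕ) : ℚ) / (mb : ℚ)))
      then (1 : ℕ) else 0) + (if na + 1 = ma then 1 else 0)
    = (if (a < b ∧ (((na + 1 : ℕ) : ℚ) / (ma : ℚ) > ((nb + 1 : ℕ) : ℚ) / (mb : ℚ))) ∨
        (b < a ∧ (((na + 1 : ℕ) : ℚ) / (ma : ℚ) ≥ ((nb + 1 : ℕ) : ℚ) / (mb : ℚ)))
      then 1 else 0) + (if nb + 1 = mb then 1 else 0) := by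
  have hma : (0 : ℚ) < (ma : ℚ) := by exact_mod_cast Nat.pos_of_ne_zero (by omega)
  have hmb : (0 : ℚ) < (mb : ℚ) := by exact_mod_cast Nat.pos_of_ne_zero (by omega)
  have hz0a : ((0 : ℕ) : ℚ) / (ma : ℚ) = 0 := by simp
  have hz0b : ((0 : ℕ) : ℚ) / (mb : ℚ) = 0 := by simp
  by_cases hwa : na + 1 = ma <;> by_cases hwb : nb + 1 = mb
  · -- both wrap
    have e1 : (na + 1) % ma = 0 := by rw [hwa, Nat.mod_self]
    have e2 : (nb + 1) % mb = 0 := by rw [hwb, Nat.mod_self]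
    have e3 : ((na + 1 : ℕ) : ℚ) / (ma : ℚ) = 1 := by
      rw [hwa]; exact div_self hma.ne'
    have e4 : ((nb + 1 : ℕ) : ℚ) / (mb : ℚ) = 1 := by
      rw [hwb]; exact div_self hmb.ne'
    rw [e1, e2, e3, e4]
    simp [hwa, hwb]
  · -- a wraps, b does not
    have e1 : (na + 1) % ma = 0 := by rw [hwa, Nat.mod_self]
    have e2 : (nb + 1) % mb = nb + 1 := Nat.mod_eq_of_lt (by omega)
    have e3 : ((na + 1 : ℕ) : ℚ) / (ma : ℚ) = 1 := by
      rw [hwa]; exact div_self hma.ne'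
    have hqb : (0 : ℚ) < ((nb + 1 : ℕ) : ℚ) / (mb : ℚ) := by positivity
    have hqb1 : ((nb + 1 : ℕ) : ℚ) / (mb : ℚ) < 1 := by
      rw [div_lt_one hmb]; exact_mod_cast (by omega : nb + 1 < mb)
    rw [e1, e2, e3]
    have hL : ¬ ((a < b ∧ (((0 : ℕ) : ℚ) / (ma : ℚ) > ((nb + 1 : ℕ) : ℚ) / (mb : ℚ))) ∨
        (b < a ∧ (((0 : ℕ) : ℚ) / (ma : ℚ) ≥ ((nb + 1 : ℕ) : ℚ) / (mb : ℚ)))) := by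
      rintro (⟨_, h⟩ | ⟨_, h⟩) <;> rw [hz0a] at h <;> linarith
    have hR : ((a < b ∧ ((1 : ℚ) > ((nb + 1 : ℕ) : ℚ) / (mb : ℚ))) ∨
        (b < a ∧ ((1 : ℚ) ≥ ((nb + 1 : ℕ) : ℚ) / (mb : ℚ)))) := by
      rcases hab.lt_or_gt with h | h
      · exact Or.inl ⟨h, hqb1⟩
      · exact Or.inr ⟨h, le_of_lt hqb1⟩
    rw [if_neg hL, if_pos hR, if_pos hwa, if_neg hwb]
  · -- b wraps, a does not
    have e1 : (na + 1) % ma = na + 1 := Nat.mod_eq_of_lt (by omega)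
    have e2 : (nb + 1) % mb = 0 := by rw [hwb, Nat.mod_self]
    have e4 : ((nb + 1 : ℕ) : ℚ) / (mb : ℚ) = 1 := by
      rw [hwb]; exact div_self hmb.ne'
    have hqa : (0 : ℚ) < ((na + 1 : ℕ) : ℚ) / (ma : ℚ) := by positivity
    have hqa1 : ((na + 1 : ℕ) : ℚ) / (ma : ℚ) < 1 := by
      rw [div_lt_one hma]; exact_mod_cast (by omega : na + 1 < ma)
    rw [e1, e2, e4]
    have hL : ((a < b ∧ (((na + 1 : ℕ) : ℚ) / (ma : ℚ) > ((0 : ℕ) : ℚ) / (mb : ℚ))) ∨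
        (b < a ∧ (((na + 1 : ℕ) : ℚ) / (ma : ℚ) ≥ ((0 : ℕ) : ℚ) / (mb : ℚ)))) := by
      rcases hab.lt_or_gt with h | h
      · exact Or.inl ⟨h, by rw [hz0b]; linarith⟩
      · exact Or.inr ⟨h, by rw [hz0b]; linarith⟩
    have hR : ¬ ((a < b ∧ (((na + 1 : ℕ) : ℚ) / (ma : ℚ) > (1 : ℚ))) ∨
        (b < a ∧ (((na + 1 : ℕ) : ℚ) / (ma : ℚ) ≥ (1 : ℚ)))) := by
      rintro (⟨_, h⟩ | ⟨_, h⟩) <;> linarith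
    rw [if_pos hL, if_neg hR, if_neg hwa, if_pos hwb]
  · -- neither wraps
    have e1 : (na + 1) % ma = na + 1 := Nat.mod_eq_of_lt (by omega)
    have e2 : (nb + 1) % mb = nb + 1 := Nat.mod_eq_of_lt (by omega)
    rw [e1, e2]
    simp [hwa, hwb]

lemma key_card (hp : 0 < p) (s : Fin p → ℕ) (hs : ∀ x, 0 < s x)
    (π : Equiv.Perm (Fin p)) (r : Fin p → ℕ) (hr : ∀ x, r x < s x) :
    (D1 s π fun x => (r x + 1) % s x).card
      + (if r (π ⟨0, hp⟩) + 1 = s (π ⟨0, hp⟩) then 1 else 0)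
    = (D3 s π r).card
      + (if r (π ⟨p - 1, Nat.sub_lt hp Nat.one_pos⟩) + 1
            = s (π ⟨p - 1, Nat.sub_lt hp Nat.one_pos⟩) then 1 else 0) := by
  classical
  set W : ℕ → ℕ := fun j =>
    if h : j < p then (if r (π ⟨j, h⟩) + 1 = s (π ⟨j, h⟩) then 1 else 0) else 0 with hW
  have hstep : ∀ i ∈ Finset.Icc 1 (p - 1),
      (if IsDesc s π (fun x => (r x + 1) % s x) i then 1 else 0) + W (i - 1)
      = (if IsDesc s π (fun x => r x + 1) i then 1 else 0) + W i := by
    intro i hi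
    rw [Finset.mem_Icc] at hi
    have h2 : i < p := lt_of_le_of_lt hi.2 (Nat.sub_lt hp Nat.one_pos)
    have h1 : i - 1 < p := lt_of_le_of_lt (Nat.sub_le _ _) h2
    have hab : π ⟨i - 1, h1⟩ ≠ π ⟨i, h2⟩ := by
      intro h
      have := π.injective h
      rw [Fin.mk.injEq] at this
      omega
    have hWi1 : W (i - 1) = if r (π ⟨i - 1, h1⟩) + 1 = s (π ⟨i - 1, h1⟩) then 1 else 0 := by
      simp [hW, h1]
    have hWi : W i = if r (π ⟨i, h2⟩) + 1 = s (π ⟨i, h2⟩) then 1 else 0 := by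
      simp [hW, h2]
    rw [hWi1, hWi, if_congr (isDesc_iff h1 h2) rfl rfl, if_congr (isDesc_iff h1 h2) rfl rfl]
    exact ratio_key hab (hr _) (hr _)
  have hsum : (D1 s π fun x => (r x + 1) % s x).card
        + ∑ i ∈ Finset.Icc 1 (p - 1), W (i - 1)
      = (D3 s π r).card + ∑ i ∈ Finset.Icc 1 (p - 1), W i := by
    have c1 : (D1 s π fun x => (r x + 1) % s x).card
        = ∑ i ∈ Finset.Icc 1 (p - 1),
            (if IsDesc s π (fun x => (r x + 1) % s x) i then 1 else 0) := by
      rw [D1, Finset.card_filter]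
    have c2 : (D3 s π r).card
        = ∑ i ∈ Finset.Icc 1 (p - 1), (if IsDesc s π (fun x => r x + 1) i then 1 else 0) := by
      rw [D3, D1, Finset.card_filter]
    rw [c1, c2, ← Finset.sum_add_distrib, ← Finset.sum_add_distrib]
    exact Finset.sum_congr rfl hstep
  have htel : (∑ i ∈ Finset.Icc 1 (p - 1), W (i - 1)) + W (p - 1)
      = (∑ i ∈ Finset.Icc 1 (p - 1), W i) + W 0 := by
    have hIcc : Finset.Icc 1 (p - 1) = Finset.Ico 1 p := by
      rw [← Finset.Ico_add_one_right_eq_Icc]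
      congr 1
      omega
    have l1 : ∑ i ∈ Finset.Icc 1 (p - 1), W (i - 1) = ∑ i ∈ Finset.range (p - 1), W i := by
      rw [hIcc, Finset.sum_Ico_eq_sum_range]
      exact Finset.sum_congr (by congr 1) fun i _ => by congr 1; omega
    have l2 : ∑ i ∈ Finset.Icc 1 (p - 1), W i = ∑ i ∈ Finset.range (p - 1), W (i + 1) := by
      rw [hIcc, Finset.sum_Ico_eq_sum_range]
      exact Finset.sum_congr (by congr 1) fun i _ => by congr 1; omega
    have hpeq : p = (p - 1) + 1 := by omega
    have r1 : ∑ i ∈ Finset.range p, W i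
        = ∑ i ∈ Finset.range (p - 1), W i + W (p - 1) := by
      rw [hpeq, Finset.sum_range_succ]; simp
    have r2 : ∑ i ∈ Finset.range p, W i
        = ∑ i ∈ Finset.range (p - 1), W (i + 1) + W 0 := by
      rw [hpeq, Finset.sum_range_succ']; simp
    rw [l1, l2]
    omega
  have hW0 : W 0 = if r (π ⟨0, hp⟩) + 1 = s (π ⟨0, hp⟩) then 1 else 0 := by simp [hW, hp]
  have hWl : W (p - 1) = if r (π ⟨p - 1, Nat.sub_lt hp Nat.one_pos⟩) + 1
      = s (π ⟨p - 1, Nat.sub_lt hp Nat.one_pos⟩) then 1 else 0 := by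
    simp [hW, Nat.sub_lt hp Nat.one_pos]
  rw [← hW0, ← hWl]
  omega

lemma zero_not_mem_D1 (s : Fin p → ℕ) (π : Equiv.Perm (Fin p)) (r : Fin p → ℕ) :
    0 ∉ D1 s π r := by
  simp [D1]

lemma p_not_mem_D1 (hp : 0 < p) (s : Fin p → ℕ) (π : Equiv.Perm (Fin p)) (r : Fin p → ℕ) :
    p ∉ D1 s π r := by
  simp only [D1, Finset.mem_filter, Finset.mem_Icc, not_and]
  intro h
  omega

lemma card_D4 (hp : 0 < p) (s : Fin p → ℕ) (hs : ∀ x, 0 < s x)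
    (π : Equiv.Perm (Fin p)) (r : Fin p → ℕ) (hr : ∀ x, r x < s x) :
    (D4 hp s π fun x => (r x + 1) % s x).card = (D3 s π r).card + 1 := by
  classical
  have hkey := key_card hp s hs π r hr
  have hc0 : ((r (π ⟨0, hp⟩) + 1) % s (π ⟨0, hp⟩) = 0) ↔
      (r (π ⟨0, hp⟩) + 1 = s (π ⟨0, hp⟩)) := mod_succ_zero_iff (hr _)
  have hcl : ((r (π ⟨p - 1, Nat.sub_lt hp Nat.one_pos⟩) + 1)
        % s (π ⟨p - 1, Nat.sub_lt hp Nat.one_pos⟩) = 0) ↔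
      (r (π ⟨p - 1, Nat.sub_lt hp Nat.one_pos⟩) + 1
        = s (π ⟨p - 1, Nat.sub_lt hp Nat.one_pos⟩)) := mod_succ_zero_iff (hr _)
  rw [D4, D2, if_congr hcl rfl rfl, if_congr hc0 rfl rfl]
  have hz := zero_not_mem_D1 s π (fun x => (r x + 1) % s x)
  have hpm := p_not_mem_D1 hp s π (fun x => (r x + 1) % s x)
  by_cases h0 : r (π ⟨0, hp⟩) + 1 = s (π ⟨0, hp⟩) <;>
    by_cases hl : r (π ⟨p - 1, Nat.sub_lt hp Nat.one_pos⟩) + 1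
        = s (π ⟨p - 1, Nat.sub_lt hp Nat.one_pos⟩) <;>
    simp only [h0, hl, if_true, if_false, if_pos, if_neg, not_false_iff] <;>
    simp only [h0, hl, if_true, if_false] at hkey
  · rw [Finset.card_insert_of_notMem hz]; omega
  · rw [Finset.card_insert_of_notMem (by simp [hz, hpm]; omega),
      Finset.card_insert_of_notMem hz]
    omega
  · omega
  · rw [Finset.card_insert_of_notMem hpm]; omega

lemma card_Dfull (hp : 0 < p) (s : Fin p → ℕ) (hs : ∀ x, 0 < s x)
    (π : Equiv.Perm (Fin p)) (r : Fin p → ℕ) (hr : ∀ x, r x < s x)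
    (h0 : s (π ⟨0, hp⟩) = 1) :
    (Dfull hp s π fun x => (r x + 1) % s x).card = (D3 s π r).card := by
  classical
  have hkey := key_card hp s hs π r hr
  have hr0 : r (π ⟨0, hp⟩) + 1 = s (π ⟨0, hp⟩) := by
    have := hr (π ⟨0, hp⟩); omega
  have hcl : ((r (π ⟨p - 1, Nat.sub_lt hp Nat.one_pos⟩) + 1)
        % s (π ⟨p - 1, Nat.sub_lt hp Nat.one_pos⟩) = 0) ↔
      (r (π ⟨p - 1, Nat.sub_lt hp Nat.one_pos⟩) + 1
        = s (π ⟨p - 1, Nat.sub_lt hp Nat.one_pos⟩)) := mod_succ_zero_iff (hr _)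
  rw [Dfull, if_congr hcl rfl rfl]
  have hpm := p_not_mem_D1 hp s π (fun x => (r x + 1) % s x)
  by_cases hl : r (π ⟨p - 1, Nat.sub_lt hp Nat.one_pos⟩) + 1
      = s (π ⟨p - 1, Nat.sub_lt hp Nat.one_pos⟩) <;>
    simp only [hr0, hl, if_true, if_false] at hkey ⊢
  · omega
  · rw [Finset.card_insert_of_notMem hpm]; omega

/-- The cyclic shift on colors `Fin m`. -/
def shiftEquiv (m : ℕ) (hm : 0 < m) : Fin m ≃ Fin m where
  toFun i := ⟨(i + 1) % m, Nat.mod_lt _ hm⟩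
  invFun i := ⟨(i + (m - 1)) % m, Nat.mod_lt _ hm⟩
  left_inv i := by
    ext
    simp only [Nat.mod_add_mod]
    have : (i : ℕ) + 1 + (m - 1) = i + m := by omega
    rw [this, Nat.add_mod_right, Nat.mod_eq_of_lt i.isLt]
  right_inv i := by
    ext
    simp only [Nat.mod_add_mod]
    have : (i : ℕ) + (m - 1) + 1 = i + m := by omega
    rw [this, Nat.add_mod_right, Nat.mod_eq_of_lt i.isLt]

end Aux

/-- `∑_{τ ∈ L(P,s)} t^{|D₄(τ)|} = ∑_{τ ∈ L(P,s)} t^{|D₃(τ)|+1}`, and if `s(x) = 1` for all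
minimal elements `x` of `P` then `∑_{τ ∈ L(P,s)} t^{|D(τ)|} = ∑_{τ ∈ L(P,s)} t^{|D₃(τ)|}`. -/
theorem descent_statistics_equidistribution {p : ℕ} (hp : 0 < p)
    (P : PartialOrder (Fin p)) (s : Fin p → ℕ) (hs : ∀ x, 0 < s x) :
    (∑ τ ∈ LPs P s,
        (Polynomial.X : Polynomial ℤ) ^ (D4 hp s τ.1 fun x => (τ.2 x : ℕ)).card =
      ∑ τ ∈ LPs P s,
        (Polynomial.X : Polynomial ℤ) ^ ((D3 s τ.1 fun x => (τ.2 x : ℕ)).card + 1)) ∧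
    ((∀ x : Fin p, (∀ y, ¬ P.lt y x) → s x = 1) →
      ∑ τ ∈ LPs P s,
          (Polynomial.X : Polynomial ℤ) ^ (Dfull hp s τ.1 fun x => (τ.2 x : ℕ)).card =
        ∑ τ ∈ LPs P s,
          (Polynomial.X : Polynomial ℤ) ^ (D3 s τ.1 fun x => (τ.2 x : ℕ)).card) := by
  constructor
  · refine (Finset.sum_equiv
      (Equiv.prodCongr (Equiv.refl (Equiv.Perm (Fin p)))
        (Equiv.piCongrRight fun x => shiftEquiv (s x) (hs x)))
      (fun τ => ?_) (fun τ hτ => ?_)).symm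
    · simp only [LPs, Finset.mem_filter, Finset.mem_univ, true_and]
      exact Iff.rfl
    · congr 1
      exact (card_D4 hp s hs τ.1 (fun x => (τ.2 x : ℕ)) (fun x => (τ.2 x).isLt)).symm
  · intro hmin
    refine (Finset.sum_equiv
      (Equiv.prodCongr (Equiv.refl (Equiv.Perm (Fin p)))
        (Equiv.piCongrRight fun x => shiftEquiv (s x) (hs x)))
      (fun τ => ?_) (fun τ hτ => ?_)).symm
    · simp only [LPs, Finset.mem_filter, Finset.mem_univ, true_and]
      exact Iff.rfl
    · congr 1
      refine (card_Dfull hp s hs τ.1 (fun x => (τ.2 x : ℕ)) (fun x => (τ.2 x).isLt) ?_).symm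
      refine hmin _ fun y hy => ?_
      have hle : τ.1.symm y ≤ (⟨0, hp⟩ : Fin p) := by
        have hτ' : τ.1 ∈ LinExt P := by
          simp only [LPs, Finset.mem_filter] at hτ; exact hτ.2
        have := hτ' (τ.1.symm y) ⟨0, hp⟩ (by rw [Equiv.apply_symm_apply]; exact le_of_lt hy)
        exact this
      have : y = τ.1 ⟨0, hp⟩ := by
        have : τ.1.symm y = ⟨0, hp⟩ := by
          rw [Fin.le_def] at hle
          simp only [Fin.val_mk] at hle
          exact Fin.ext (by simp only [Fin.val_mk]; omega)
        rw [← this, Equiv.apply_symm_apply]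
      rw [this] at hy
      exact lt_irrefl _ hy
end
end

section
/- Let P be a labeled poset on [p] and s : [p] → ℤ₊. For τ = (π,r) ∈ L(P,s) define τ* = (π₁*π₂*⋯π_p*, r*), where i* = p+1−i and r*(i*) = s(i) − 1 − r(i) for all i ∈ [p]. Then the map τ ↦ τ* is a bijection from L(P,s) onto L(P*,s*), and for every τ ∈ L(P,s) one has D₃(τ) = [p−1] \ D₁(τ*) and D₁(τ) = [p−1] \ D₃(τ*), where D₁(τ*) and D₃(τ*) are computed with respect to s*. -/
open scoped Classical

noncomputable section

/-- The dual labeled poset `P*`: `i ⪯ j` in `P` iff `i* ⪯* j*` in `P*`, where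
`i* = p + 1 - i` is realized by `Fin.rev`. -/
def dualOrder {p : ℕ} (P : PartialOrder (Fin p)) : PartialOrder (Fin p) where
  le a b := P.le a.rev b.rev
  lt a b := P.lt a.rev b.rev
  le_refl _ := P.le_refl _
  le_trans _ _ _ h1 h2 := P.le_trans _ _ _ h1 h2
  le_antisymm _ _ h1 h2 := Fin.rev_injective (P.le_antisymm _ _ h1 h2)
  lt_iff_le_not_ge _ _ := P.lt_iff_le_not_ge _ _

/-- `L(P,s)` as a set of pairs `(π, r)` with `π` a linear extension of `P` and
`r : [p] → ℕ` with `r(x) < s(x)`. -/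
def LPsSet {p : ℕ} (P : PartialOrder (Fin p)) (s : Fin p → ℕ) :
    Set (Equiv.Perm (Fin p) × (Fin p → ℕ)) :=
  {τ | τ.1 ∈ LinExt P ∧ ∀ x, τ.2 x < s x}


/-!
Starring reverses the order of any two distinct letters, and `r ↦ s - 1 - r` sends the ratio
`r / s` to `1 - (r + 1) / s` and `(r + 1) / s` to `1 - r / s`. So at each position the descent
condition of `τ*` is the descent condition of `τ` with both comparisons flipped, and a strict
comparison flipped is the negation of the weak one: each position is a descent of exactly one
of the two. Applying the map twice returns `τ`, which gives the bijection.
-/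

/-- Positions `i - 1, i` of a colored permutation form a descent when the letters there are
`a, b` with colour ratios `x, y`; this is the body of `IsDesc`. -/
def IsDescentPair {α : Type*} [LinearOrder α] (a b : α) (x y : ℚ) : Prop :=
  (a < b ∧ x > y) ∨ (b < a ∧ x ≥ y)

theorem not_isDescentPair_iff {p : ℕ} {a b : Fin p} (hab : a ≠ b) (x y : ℚ) :
    ¬IsDescentPair a b x y ↔ IsDescentPair a.rev b.rev (1 - x) (1 - y) := by
  unfold IsDescentPair
  rw [Fin.rev_lt_rev, Fin.rev_lt_rev]
  rcases hab.lt_or_gt with h | h <;>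
    simp only [h, h.asymm, true_and, false_and, or_false, false_or, gt_iff_lt, ge_iff_le,
      not_lt, not_le] <;>
    constructor <;> intro <;> linarith

theorem isDesc_iff_isDescentPair {p : ℕ} (s : Fin p → ℕ) (π : Equiv.Perm (Fin p))
    (r : Fin p → ℕ) {i : ℕ} (h₁ : i - 1 < p) (h₂ : i < p) :
    IsDesc s π r i ↔
      IsDescentPair (π ⟨i - 1, h₁⟩) (π ⟨i, h₂⟩)
        ((r (π ⟨i - 1, h₁⟩) : ℚ) / s (π ⟨i - 1, h₁⟩)) ((r (π ⟨i, h₂⟩) : ℚ) / s (π ⟨i, h₂⟩)) :=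
  ⟨fun ⟨_, _, h⟩ => h, fun h => ⟨h₁, h₂, h⟩⟩

section Complement

variable {p : ℕ} {s s' r r' : Fin p → ℕ}

theorem isDesc_iff_not_isDesc_trans_revPerm (π : Equiv.Perm (Fin p))
    (hq : ∀ x, (r' x.rev : ℚ) / s' x.rev = 1 - (r x : ℚ) / s x) {i : ℕ}
    (hi : i ∈ Finset.Icc 1 (p - 1)) :
    IsDesc s π r i ↔ ¬IsDesc s' (π.trans Fin.revPerm) r' i := by
  obtain ⟨hi₁, hi₂⟩ := Finset.mem_Icc.1 hi
  have h₁ : i - 1 < p := by omega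
  have h₂ : i < p := by omega
  have hab : π ⟨i - 1, h₁⟩ ≠ π ⟨i, h₂⟩ :=
    π.injective.ne (by simp only [ne_eq, Fin.mk.injEq]; omega)
  rw [isDesc_iff_isDescentPair _ _ _ h₁ h₂, isDesc_iff_isDescentPair _ _ _ h₁ h₂]
  simp only [Equiv.trans_apply, Fin.revPerm_apply, hq]
  rw [← not_isDescentPair_iff hab, not_not]

theorem D1_eq_Icc_sdiff_D1_trans_revPerm (π : Equiv.Perm (Fin p))
    (hq : ∀ x, (r' x.rev : ℚ) / s' x.rev = 1 - (r x : ℚ) / s x) :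
    D1 s π r = Finset.Icc 1 (p - 1) \ D1 s' (π.trans Fin.revPerm) r' := by
  rw [D1, D1, ← Finset.filter_not]
  exact Finset.filter_congr fun i hi => isDesc_iff_not_isDesc_trans_revPerm π hq hi

end Complement

theorem cast_sub_div_self {k n : ℕ} (hk : k ≤ n) (hn : 0 < n) :
    ((n - k : ℕ) : ℚ) / n = 1 - (k : ℚ) / n := by
  rw [Nat.cast_sub hk, sub_div, div_self (by positivity)]

theorem cast_sub_one_sub_div {r n : ℕ} (h : r < n) :
    ((n - 1 - r : ℕ) : ℚ) / n = 1 - ((r + 1 : ℕ) : ℚ) / n := by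
  rw [Nat.sub_sub, Nat.add_comm, cast_sub_div_self h (by omega)]

theorem cast_sub_one_sub_add_one_div {r n : ℕ} (h : r < n) :
    ((n - 1 - r + 1 : ℕ) : ℚ) / n = 1 - (r : ℚ) / n := by
  rw [show n - 1 - r + 1 = n - r by omega, cast_sub_div_self h.le (by omega)]

section Bijection

variable {p : ℕ}

/-- The map `τ ↦ τ*`. -/
def dualColored (s : Fin p → ℕ) (τ : Equiv.Perm (Fin p) × (Fin p → ℕ)) :
    Equiv.Perm (Fin p) × (Fin p → ℕ) :=
  (τ.1.trans Fin.revPerm, fun j => s j.rev - 1 - τ.2 j.rev)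

theorem comp_rev_comp_rev {α : Type*} (s : Fin p → α) : (s ∘ Fin.rev) ∘ Fin.rev = s :=
  funext fun x => congrArg s x.rev_rev

theorem dualOrder_dualOrder (P : PartialOrder (Fin p)) : dualOrder (dualOrder P) = P :=
  PartialOrder.ext fun a b =>
    show P.le a.rev.rev b.rev.rev ↔ P.le a b by rw [Fin.rev_rev, Fin.rev_rev]

theorem trans_revPerm_mem_linExt_dualOrder {P : PartialOrder (Fin p)} {π : Equiv.Perm (Fin p)}
    (hπ : π ∈ LinExt P) : π.trans Fin.revPerm ∈ LinExt (dualOrder P) := by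
  intro i j (h : P.le (π i).rev.rev (π j).rev.rev)
  rw [Fin.rev_rev, Fin.rev_rev] at h
  exact hπ i j h

theorem mapsTo_dualColored (P : PartialOrder (Fin p)) (s : Fin p → ℕ) :
    Set.MapsTo (dualColored s) (LPsSet P s) (LPsSet (dualOrder P) (s ∘ Fin.rev)) := by
  rintro ⟨π, r⟩ ⟨hπ, hr⟩
  refine ⟨trans_revPerm_mem_linExt_dualOrder hπ, fun j => ?_⟩
  have := hr j.rev
  simp only [dualColored, Function.comp_apply]
  omega

theorem dualColored_dualColored {s : Fin p → ℕ} {τ : Equiv.Perm (Fin p) × (Fin p → ℕ)}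
    (hτ : ∀ x, τ.2 x < s x) : dualColored (s ∘ Fin.rev) (dualColored s τ) = τ := by
  refine Prod.ext (Equiv.ext fun i => by simp [dualColored]) (funext fun j => ?_)
  have := hτ j
  simp only [dualColored, Function.comp_apply, Fin.rev_rev]
  omega

theorem bijOn_dualColored (P : PartialOrder (Fin p)) (s : Fin p → ℕ) :
    Set.BijOn (dualColored s) (LPsSet P s) (LPsSet (dualOrder P) (s ∘ Fin.rev)) := by
  have hback := mapsTo_dualColored (dualOrder P) (s ∘ Fin.rev)
  rw [dualOrder_dualOrder, comp_rev_comp_rev] at hback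
  refine Set.InvOn.bijOn ⟨fun τ hτ => dualColored_dualColored hτ.2, fun τ hτ => ?_⟩
    (mapsTo_dualColored P s) hback
  simpa only [comp_rev_comp_rev] using dualColored_dualColored (s := s ∘ Fin.rev) hτ.2

end Bijection

theorem dual_bijection_and_descent_complement_general {p : ℕ}
    (P : PartialOrder (Fin p)) (s : Fin p → ℕ) :
    Set.BijOn
      (fun τ : Equiv.Perm (Fin p) × (Fin p → ℕ) =>
        (τ.1.trans Fin.revPerm, fun j => s (Fin.rev j) - 1 - τ.2 (Fin.rev j)))
      (LPsSet P s) (LPsSet (dualOrder P) fun j => s (Fin.rev j)) ∧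
    ∀ τ ∈ LPsSet P s,
      D3 s τ.1 τ.2 =
        Finset.Icc 1 (p - 1) \
          D1 (fun j => s (Fin.rev j)) (τ.1.trans Fin.revPerm)
            (fun j => s (Fin.rev j) - 1 - τ.2 (Fin.rev j)) ∧
      D1 s τ.1 τ.2 =
        Finset.Icc 1 (p - 1) \
          D3 (fun j => s (Fin.rev j)) (τ.1.trans Fin.revPerm)
            (fun j => s (Fin.rev j) - 1 - τ.2 (Fin.rev j)) := by
  refine ⟨bijOn_dualColored P s, fun ⟨π, r⟩ ⟨_, hr⟩ => ⟨?_, ?_⟩⟩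
  · refine D1_eq_Icc_sdiff_D1_trans_revPerm π fun x => ?_
    simpa only [Fin.rev_rev] using cast_sub_one_sub_div (hr x)
  · refine D1_eq_Icc_sdiff_D1_trans_revPerm π fun x => ?_
    simpa only [Fin.rev_rev] using cast_sub_one_sub_add_one_div (hr x)

/-- `τ ↦ τ* = (π₁* ⋯ π_p*, r*)`, where `i* = p+1-i` (`Fin.rev`) and
`r*(i*) = s(i) - 1 - r(i)`, is a bijection `L(P,s) → L(P*,s*)`, and
`D₃(τ) = [p-1] \ D₁(τ*)`, `D₁(τ) = [p-1] \ D₃(τ*)` (descents of `τ*` computed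
with respect to `s*(i*) = s(i)`). -/
theorem dual_bijection_and_descent_complement {p : ℕ}
    (P : PartialOrder (Fin p)) (s : Fin p → ℕ) (hs : ∀ x, 0 < s x) :
    Set.BijOn
      (fun τ : Equiv.Perm (Fin p) × (Fin p → ℕ) =>
        (τ.1.trans Fin.revPerm, fun j => s (Fin.rev j) - 1 - τ.2 (Fin.rev j)))
      (LPsSet P s) (LPsSet (dualOrder P) fun j => s (Fin.rev j)) ∧
    ∀ τ ∈ LPsSet P s,
      D3 s τ.1 τ.2 =
        Finset.Icc 1 (p - 1) \
          D1 (fun j => s (Fin.rev j)) (τ.1.trans Fin.revPerm)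
            (fun j => s (Fin.rev j) - 1 - τ.2 (Fin.rev j)) ∧
      D1 s τ.1 τ.2 =
        Finset.Icc 1 (p - 1) \
          D3 (fun j => s (Fin.rev j)) (τ.1.trans Fin.revPerm)
            (fun j => s (Fin.rev j) - 1 - τ.2 (Fin.rev j)) :=
  dual_bijection_and_descent_complement_general P s
end
end

section
/- Let P be a sign-ranked labeled poset on [p] whose rank function ρ attains only non-negative values, and let s(x) = ρ(x) + 1 for all x ∈ [p]. Define u : ℕ(P,s) → ℤ^p by u(f)(x*) = f(x) + ρ(x), where x* = p+1−x denotes the relabeling in the dual poset P* with s*(x*) = s(x). Then for every n ∈ ℕ, u restricts to a bijection from ℕ_{≤n}(P,s) onto ℕ_{<n+1}(P*,s*). -/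
/-!
Write `s = ρ + 1` and `g = f + ρ`, so that `g / s = f / s + 1 - 1 / s`. Along a cover `x ⋖ y`
of `P` with `x < y` the weight goes up from `k` to `k + 1`, and for integers `a, b`
`a / k ≤ b / (k + 1) ↔ (a + k - 1) / k < (b + k) / (k + 1)`; along a cover with `x > y` the
weak and strict inequalities are exchanged in the same way. Since `*` reverses the labels,
this turns the cover conditions for `f ∈ ℕ(P,s)` into exactly those for `u(f) ∈ ℕ(P*,s*)`,
and the `(P,s)`-partition conditions follow from those at covers by transitivity. Likewise
`f / s ≤ n ↔ (f + ρ) / s < n + 1`. For surjectivity, `g(x*) - ρ(x)` is an integer-valued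
`(P,s)`-partition, so its ratio to `s` is monotone along `P`; it is `≥ 0` at minimal elements
(where `ρ = 0`), hence everywhere, and the preimage is a natural-number function.
-/

open scoped Classical

noncomputable section

/-- `(x,y)` is a covering relation of `P`. -/
def Covers {p : ℕ} (P : PartialOrder (Fin p)) (x y : Fin p) : Prop :=
  P.lt x y ∧ ∀ z, P.lt x z → ¬ P.lt z y

/-- `ℕ_{≤n}(P,s)`. -/
def Nle {p : ℕ} (P : PartialOrder (Fin p)) (s : Fin p → ℕ) (n : ℕ) : Set (Fin p → ℕ) :=
  {f | IsLHPart P s f ∧ ∀ x, (f x : ℚ) / (s x : ℚ) ≤ (n : ℚ)}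

/-- `ℕ_{<m}(P,s)`. -/
def Nlt {p : ℕ} (P : PartialOrder (Fin p)) (s : Fin p → ℕ) (m : ℕ) : Set (Fin p → ℕ) :=
  {f | IsLHPart P s f ∧ ∀ x, (f x : ℚ) / (s x : ℚ) < (m : ℚ)}

section

variable {p : ℕ}

def IsPPartition {β : Type*} [Preorder β] (P : PartialOrder (Fin p)) (F : Fin p → β) : Prop :=
  (∀ x y, P.lt x y → F x ≤ F y) ∧ ∀ x y, P.lt x y → y < x → F x < F y

theorem isLHPart_iff_isPPartition (P : PartialOrder (Fin p)) (s f : Fin p → ℕ) :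
    IsLHPart P s f ↔ IsPPartition P fun x => (f x : ℚ) / s x :=
  Iff.rfl

theorem isPPartition_iff_covers {β : Type*} [Preorder β] (P : PartialOrder (Fin p))
    (F : Fin p → β) :
    IsPPartition P F ↔ ∀ x y, Covers P x y → F x ≤ F y ∧ (y < x → F x < F y) := by
  refine ⟨fun hF x y hxy => ⟨hF.1 x y hxy.1, hF.2 x y hxy.1⟩, fun hF => ?_⟩
  suffices h : ∀ x y, P.lt x y → F x ≤ F y ∧ (y < x → F x < F y) from
    ⟨fun x y hxy => (h x y hxy).1, fun x y hxy => (h x y hxy).2⟩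
  intro x y hxy
  have hchain := @transGen_covBy_of_lt _ P.toPreorder
    (@Fintype.toLocallyFiniteOrder _ P.toPreorder _ _ _) x y hxy
  clear hxy
  induction hchain with
  | single hc => exact hF _ _ hc
  | tail _ hzy ih =>
    obtain ⟨hle, hlt⟩ := ih
    obtain ⟨hle', hlt'⟩ := hF _ _ hzy
    refine ⟨hle.trans hle', fun hyx => ?_⟩
    rcases lt_or_ge _ x with hzx | hxz
    · exact (hlt hzx).trans_le hle'
    · exact hle.trans_lt (hlt' (by omega))

theorem div_le_div_succ_iff_shift_lt (a b : ℤ) (k : ℕ) :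
    (a : ℚ) / (k + 1) ≤ b / (k + 1 + 1) ↔
      (a + k : ℚ) / (k + 1) < (b + (k + 1)) / (k + 1 + 1) := by
  rw [div_le_div_iff₀ (by positivity) (by positivity),
    div_lt_div_iff₀ (by positivity) (by positivity)]
  have hint : (a * (k + 1 + 1) : ℚ) ≤ b * (k + 1) ↔
      (a * (k + 1 + 1) : ℚ) < b * (k + 1) + 1 := by
    exact_mod_cast Int.lt_add_one_iff.symm
  rw [hint]
  constructor <;> intro h <;> linarith

theorem div_succ_lt_div_iff_shift_le (a b : ℤ) (k : ℕ) :
    (a : ℚ) / (k + 1 + 1) < b / (k + 1) ↔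
      (a + (k + 1) : ℚ) / (k + 1 + 1) ≤ (b + k) / (k + 1) := by
  rw [div_lt_div_iff₀ (by positivity) (by positivity),
    div_le_div_iff₀ (by positivity) (by positivity)]
  have hint : (a * (k + 1) : ℚ) < b * (k + 1 + 1) ↔
      (a * (k + 1) : ℚ) + 1 ≤ b * (k + 1 + 1) := by
    exact_mod_cast Int.add_one_le_iff.symm
  rw [hint]
  constructor <;> intro h <;> linarith

theorem div_le_iff_shift_lt_succ (a : ℤ) (k n : ℕ) :
    (a : ℚ) / (k + 1) ≤ n ↔ (a + k : ℚ) / (k + 1) < n + 1 := by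
  rw [div_le_iff₀ (by positivity), div_lt_iff₀ (by positivity)]
  have hint : (a : ℚ) ≤ n * (k + 1) ↔ (a : ℚ) < n * (k + 1) + 1 := by
    exact_mod_cast Int.lt_add_one_iff.symm
  rw [hint]
  constructor <;> intro h <;> linarith

theorem covers_dualOrder_iff (P : PartialOrder (Fin p)) (a b : Fin p) :
    Covers (dualOrder P) a b ↔ Covers P a.rev b.rev := by
  simp only [Covers, Fin.rev_surjective.forall (p := fun z => P.lt a.rev z → ¬P.lt z b.rev)]
  rfl

def IsSignRankStep (P : PartialOrder (Fin p)) (ρ : Fin p → ℕ) : Prop :=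
  ∀ x y, Covers P x y → (x < y → ρ y = ρ x + 1) ∧ (y < x → ρ x = ρ y + 1)

variable {P : PartialOrder (Fin p)} {ρ : Fin p → ℕ}

theorem IsSignRankStep.cover_iff_shift (hρ : IsSignRankStep P ρ) {x y : Fin p}
    (hxy : Covers P x y) (a b : ℤ) :
    ((a : ℚ) / (ρ x + 1) ≤ b / (ρ y + 1) ∧ (y < x → (a : ℚ) / (ρ x + 1) < b / (ρ y + 1))) ↔
      ((a + ρ x : ℚ) / (ρ x + 1) ≤ (b + ρ y) / (ρ y + 1) ∧
        (x < y → (a + ρ x : ℚ) / (ρ x + 1) < (b + ρ y) / (ρ y + 1))) := by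
  obtain ⟨hasc, hdesc⟩ := hρ x y hxy
  have hne : x ≠ y := @ne_of_lt _ P.toPreorder _ _ hxy.1
  obtain hlt | hgt : x < y ∨ y < x := by omega
  · have hgt : ¬ y < x := by omega
    simp only [hlt, hgt, false_imp_iff, true_imp_iff, and_true]
    rw [and_iff_right_of_imp le_of_lt, hasc hlt]
    push_cast
    exact div_le_div_succ_iff_shift_lt a b (ρ x)
  · have hlt : ¬ x < y := by omega
    simp only [hlt, hgt, false_imp_iff, true_imp_iff, and_true]
    rw [and_iff_right_of_imp le_of_lt, hdesc hgt]
    push_cast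
    exact div_succ_lt_div_iff_shift_le a b (ρ y)

theorem IsSignRankStep.isPPartition_shift_dual_iff (hρ : IsSignRankStep P ρ)
    (f : Fin p → ℤ) :
    IsPPartition (dualOrder P) (fun a => ((f a.rev : ℚ) + ρ a.rev) / (ρ a.rev + 1)) ↔
      IsPPartition P fun x => (f x : ℚ) / (ρ x + 1) := by
  rw [isPPartition_iff_covers, isPPartition_iff_covers]
  constructor
  · intro h x y hxy
    have := h x.rev y.rev (by rwa [covers_dualOrder_iff, Fin.rev_rev, Fin.rev_rev])
    simp only [Fin.rev_rev, Fin.rev_lt_rev] at this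
    exact (hρ.cover_iff_shift hxy _ _).2 this
  · intro h a b hab
    rw [covers_dualOrder_iff] at hab
    simpa only [Fin.rev_lt_rev] using (hρ.cover_iff_shift hab _ _).1 (h _ _ hab)

theorem le_of_forall_minimal_le {β : Type*} [Preorder β] (P : PartialOrder (Fin p))
    {F : Fin p → β} {c : β} (hF : ∀ x y, P.lt x y → F x ≤ F y)
    (hmin : ∀ x, (∀ y, ¬ P.lt y x) → c ≤ F x) (x : Fin p) : c ≤ F x := by
  induction x using
    (@wellFounded_lt _ P.toLT (@Finite.to_wellFoundedLT _ _ P.toPreorder)).induction with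
  | _ x ih =>
    by_cases hx : ∀ y, ¬ P.lt y x
    · exact hmin x hx
    · obtain ⟨y, hyx⟩ := not_forall_not.1 hx
      exact (ih y hyx).trans (hF y x hyx)

theorem IsSignRankStep.rank_le_of_isLHPart_dual (hρ : IsSignRankStep P ρ)
    (hmin : ∀ x, (∀ y, ¬ P.lt y x) → ρ x = 0) {g : Fin p → ℕ}
    (hg : IsLHPart (dualOrder P) (fun a => ρ a.rev + 1) g) (x : Fin p) : ρ x ≤ g x.rev := by
  set f : Fin p → ℤ := fun x => g x.rev - ρ x with hf
  have hshift : (fun a => ((f a.rev : ℚ) + ρ a.rev) / (ρ a.rev + 1)) =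
      fun a => (g a : ℚ) / ((ρ a.rev + 1 : ℕ) : ℚ) := by
    funext a
    simp [hf]
  have hpart : IsPPartition P fun x => (f x : ℚ) / (ρ x + 1) := by
    rw [← hρ.isPPartition_shift_dual_iff, hshift]
    exact hg
  have hnonneg : (0 : ℚ) ≤ f x / (ρ x + 1) :=
    le_of_forall_minimal_le P hpart.1 (fun x hx => by simp [hf, hmin x hx]) x
  have : (0 : ℚ) ≤ g x.rev - ρ x := by
    simpa [hf] using (le_div_iff₀ (by positivity : (0 : ℚ) < ρ x + 1)).1 hnonneg
  exact_mod_cast sub_nonneg.1 this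

theorem IsSignRankStep.isLHPart_shift_iff (hρ : IsSignRankStep P ρ) (f : Fin p → ℕ) :
    IsLHPart (dualOrder P) (fun a => ρ a.rev + 1) (fun a => f a.rev + ρ a.rev) ↔
      IsLHPart P (fun x => ρ x + 1) f := by
  simpa [isLHPart_iff_isPPartition] using hρ.isPPartition_shift_dual_iff fun x => (f x : ℤ)

theorem shift_lt_succ_iff (ρ f : Fin p → ℕ) (n : ℕ) :
    (∀ a : Fin p,
        ((f a.rev + ρ a.rev : ℕ) : ℚ) / ((ρ a.rev + 1 : ℕ) : ℚ) < ((n + 1 : ℕ) : ℚ)) ↔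
      ∀ x, (f x : ℚ) / ((ρ x + 1 : ℕ) : ℚ) ≤ n := by
  rw [Fin.rev_surjective.forall]
  simp only [Fin.rev_rev]
  push_cast
  exact forall_congr' fun x => (div_le_iff_shift_lt_succ (f x) (ρ x) n).symm

theorem IsSignRankStep.shift_mem_Nlt_iff (hρ : IsSignRankStep P ρ) (f : Fin p → ℕ) (n : ℕ) :
    (fun a => f a.rev + ρ a.rev) ∈ Nlt (dualOrder P) (fun a => ρ a.rev + 1) (n + 1) ↔
      f ∈ Nle P (fun x => ρ x + 1) n :=
  and_congr (hρ.isLHPart_shift_iff f) (shift_lt_succ_iff ρ f n)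

end

/-- Let `P` be sign-ranked with non-negative rank function `ρ` (encoded by: `ρ x = 0` for
minimal `x`, and `ρ` changes by `ε(x,y) = ±1` along covering relations according to the
sign of the labels), and let `s = ρ + 1`. Then `u(f)(x*) = f(x) + ρ(x)` restricts to a
bijection `ℕ_{≤n}(P,s) → ℕ_{<n+1}(P*,s*)` for every `n ∈ ℕ`. -/
theorem sign_ranked_shift_bijection {p : ℕ}
    (P : PartialOrder (Fin p)) (ρ : Fin p → ℕ)
    (hmin : ∀ x, (∀ y, ¬ P.lt y x) → ρ x = 0)
    (hcov : ∀ x y, Covers P x y →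
      (x < y → ρ y = ρ x + 1) ∧ (y < x → ρ x = ρ y + 1)) :
    ∀ n : ℕ,
      Set.BijOn (fun (f : Fin p → ℕ) (a : Fin p) => f (Fin.rev a) + ρ (Fin.rev a))
        (Nle P (fun x => ρ x + 1) n)
        (Nlt (dualOrder P) (fun a => ρ (Fin.rev a) + 1) (n + 1)) := by
  intro n
  have hρ : IsSignRankStep P ρ := hcov
  refine ⟨fun f hf => (hρ.shift_mem_Nlt_iff f n).2 hf, ?_, ?_⟩
  · intro f _ f' _ h
    funext x
    have := congrFun h x.rev
    simp only [Fin.rev_rev] at this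
    omega
  · intro g hg
    have hshift : (fun a => g a.rev.rev - ρ a.rev + ρ a.rev) = g := by
      funext a
      rw [Nat.sub_add_cancel (hρ.rank_le_of_isLHPart_dual hmin hg.1 a.rev), Fin.rev_rev]
    refine ⟨fun x => g x.rev - ρ x, (hρ.shift_mem_Nlt_iff _ n).1 ?_, hshift⟩
    rwa [hshift]
end
end
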